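/- arXiv:2104.07990 — 7 statements merged into one kernel-verified Lean document; each statement's English description precedes it below -/
import Mathlib

section
/- Let k0>0, L>0, α∈C¹([0,L],ℝ), and let n∈S² be a constant unit vector (n′(t)=0). Then for every (k1,k2,t) with k1²+k2²<k0² and t∈(0,L), the absolute value of the Jacobian determinant of T± at (k1,k2,t) equals k0·|α′(t)|·|n2·k1 − n1·k2| / κ(k1,k2). -/
open MeasureTheory Set

noncomputable section

/-- Euclidean dot product on ℝ³. -/
def dot3 (a b : Fin 3 → ℝ) : ℝ := a 0 * b 0 + a 1 * b 1 + a 2 * b 2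

/-- Cross product on ℝ³. -/
def cross3 (a b : Fin 3 → ℝ) : Fin 3 → ℝ :=
  ![a 1 * b 2 - a 2 * b 1, a 2 * b 0 - a 0 * b 2, a 0 * b 1 - a 1 * b 0]

/-- Rotation about axis `n` by angle `θ` (Rodrigues' formula). -/
def rot3 (n : Fin 3 → ℝ) (θ : ℝ) (y : Fin 3 → ℝ) : Fin 3 → ℝ :=
  fun i => (1 - Real.cos θ) * dot3 n y * n i + Real.cos θ * y i - Real.sin θ * cross3 n y i

/-- κ(k1,k2) = √(k0² − k1² − k2²) (real on the relevant region k1²+k2²<k0²). -/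
def kappa (k0 k1 k2 : ℝ) : ℝ := Real.sqrt (k0 ^ 2 - k1 ^ 2 - k2 ^ 2)

/-- h±(k1,k2) = (k1, k2, ±κ − k0)ᵀ, where ε = ±1 encodes the sign. -/
def hpm (k0 ε k1 k2 : ℝ) : Fin 3 → ℝ := ![k1, k2, ε * kappa k0 k1 k2 - k0]

/-- T±(k1,k2,t) = R_{n(t),α(t)} h±(k1,k2), as a map ℝ³ → ℝ³. -/
def Tmap (k0 ε : ℝ) (n : ℝ → Fin 3 → ℝ) (α : ℝ → ℝ) (p : Fin 3 → ℝ) : Fin 3 → ℝ :=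
  rot3 (n (p 2)) (α (p 2)) (hpm k0 ε (p 0) (p 1))

/-- U = {(k1,k2,t) : k1²+k2² < k0², 0 ≤ t ≤ L}. -/
def Uset (k0 L : ℝ) : Set (Fin 3 → ℝ) :=
  {p | p 0 ^ 2 + p 1 ^ 2 < k0 ^ 2 ∧ p 2 ∈ Icc (0 : ℝ) L}

set_option maxHeartbeats 1600000 in
set_option maxRecDepth 100000 in
theorem stmt1 (k0 L ε : ℝ) (hk0 : 0 < k0) (hL : 0 < L) (hε : ε = 1 ∨ ε = -1)
    (n : Fin 3 → ℝ) (hunit : dot3 n n = 1)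
    (α α' : ℝ → ℝ) (hα : ContDiffOn ℝ 1 α (Icc 0 L))
    (hα' : ∀ t ∈ Ioo (0 : ℝ) L, HasDerivAt α (α' t) t) :
    ∀ k1 k2 t : ℝ, k1 ^ 2 + k2 ^ 2 < k0 ^ 2 → t ∈ Ioo (0 : ℝ) L →
      |LinearMap.det
          (fderiv ℝ (Tmap k0 ε (fun _ => n) α) ![k1, k2, t]).toLinearMap| =
        k0 * |α' t| * |n 1 * k1 - n 0 * k2| / kappa k0 k1 k2 := by
  intro k1 k2 t hk ht
  have hKpos : (0:ℝ) < k0 ^ 2 - k1 ^ 2 - k2 ^ 2 := by linarith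
  have hn : n 0 * n 0 + n 1 * n 1 + n 2 * n 2 = 1 := hunit
  set κ := kappa k0 k1 k2 with hκdef
  have hκpos : 0 < κ := Real.sqrt_pos.mpr hKpos
  have hκ2 : κ ^ 2 = k0 ^ 2 - k1 ^ 2 - k2 ^ 2 := Real.sq_sqrt hKpos.le
  set c := Real.cos (α t) with hc
  set s := Real.sin (α t) with hs
  set a := α' t with ha
  have hsc : s ^ 2 + c ^ 2 = 1 := Real.sin_sq_add_cos_sq (α t)
  set P : Fin 3 → ℝ := ![k1, k2, t] with hPdef
  have hP0 : P 0 = k1 := rfl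
  have hP1 : P 1 = k2 := rfl
  have hP2 : P 2 = t := rfl
  set M : Matrix (Fin 3) (Fin 3) ℝ :=
    !![(1-c)*(n 0 - n 2*(ε*k1/κ))*n 0 + c + s*(n 1*(ε*k1/κ)),
       (1-c)*(n 1 - n 2*(ε*k2/κ))*n 0 + s*(n 1*(ε*k2/κ) + n 2),
       a*(s*(n 0*k1 + n 1*k2 + n 2*(ε*κ - k0))*n 0 - s*k1 - c*(n 1*(ε*κ - k0) - n 2*k2));
       (1-c)*(n 0 - n 2*(ε*k1/κ))*n 1 - s*(n 2 + n 0*(ε*k1/κ)),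
       (1-c)*(n 1 - n 2*(ε*k2/κ))*n 1 + c - s*(n 0*(ε*k2/κ)),
       a*(s*(n 0*k1 + n 1*k2 + n 2*(ε*κ - k0))*n 1 - s*k2 - c*(n 2*k1 - n 0*(ε*κ - k0)));
       (1-c)*(n 0 - n 2*(ε*k1/κ))*n 2 + c*(-(ε*k1/κ)) + s*(n 1),
       (1-c)*(n 1 - n 2*(ε*k2/κ))*n 2 + c*(-(ε*k2/κ)) - s*(n 0),
       a*(s*(n 0*k1 + n 1*k2 + n 2*(ε*κ - k0))*n 2 - s*(ε*κ - k0) - c*(n 0*k2 - n 1*k1))] with hM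
  set D : (Fin 3 → ℝ) →L[ℝ] (Fin 3 → ℝ) :=
    LinearMap.toContinuousLinearMap (Matrix.toLin' M) with hD
  -- basic derivatives
  have hu : HasFDerivAt (fun p : Fin 3 → ℝ => p 0)
      (ContinuousLinearMap.proj 0 : (Fin 3 → ℝ) →L[ℝ] ℝ) P :=
    (ContinuousLinearMap.proj 0 : (Fin 3 → ℝ) →L[ℝ] ℝ).hasFDerivAt
  have hv : HasFDerivAt (fun p : Fin 3 → ℝ => p 1)
      (ContinuousLinearMap.proj 1 : (Fin 3 → ℝ) →L[ℝ] ℝ) P :=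
    (ContinuousLinearMap.proj 1 : (Fin 3 → ℝ) →L[ℝ] ℝ).hasFDerivAt
  have hw : HasFDerivAt (fun p : Fin 3 → ℝ => p 2)
      (ContinuousLinearMap.proj 2 : (Fin 3 → ℝ) →L[ℝ] ℝ) P :=
    (ContinuousLinearMap.proj 2 : (Fin 3 → ℝ) →L[ℝ] ℝ).hasFDerivAt
  have hA : HasFDerivAt (fun p : Fin 3 → ℝ => α (p 2))
      (a • (ContinuousLinearMap.proj 2 : (Fin 3 → ℝ) →L[ℝ] ℝ)) P :=
    (hα' t ht).comp_hasFDerivAt P hw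
  have hC : HasFDerivAt (fun p : Fin 3 → ℝ => Real.cos (α (p 2)))
      ((-(s*a)) • (ContinuousLinearMap.proj 2 : (Fin 3 → ℝ) →L[ℝ] ℝ)) P := by
    refine (hA.cos).congr_fderiv ?_
    ext v
    simp [hP2, ← hs, mul_comm]
    ring
  have hS : HasFDerivAt (fun p : Fin 3 → ℝ => Real.sin (α (p 2)))
      ((c*a) • (ContinuousLinearMap.proj 2 : (Fin 3 → ℝ) →L[ℝ] ℝ)) P := by
    refine (hA.sin).congr_fderiv ?_
    ext v
    simp [hP2, ← hc, mul_comm]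
    ring
  have hKf : HasFDerivAt (fun p : Fin 3 → ℝ => kappa k0 (p 0) (p 1))
      ((-(k1/κ)) • (ContinuousLinearMap.proj 0 : (Fin 3 → ℝ) →L[ℝ] ℝ)
        + (-(k2/κ)) • (ContinuousLinearMap.proj 1 : (Fin 3 → ℝ) →L[ℝ] ℝ)) P := by
    have hsq0 : HasFDerivAt (fun p : Fin 3 → ℝ => p 0 ^ 2)
        ((2*k1) • (ContinuousLinearMap.proj 0 : (Fin 3 → ℝ) →L[ℝ] ℝ)) P := by
      have e : (fun p : Fin 3 → ℝ => p 0 ^ 2) = fun p => p 0 * p 0 := by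
        funext p; ring
      rw [e]
      exact (hu.mul hu).congr_fderiv (by ext v; simp [hP0]; ring)
    have hsq1 : HasFDerivAt (fun p : Fin 3 → ℝ => p 1 ^ 2)
        ((2*k2) • (ContinuousLinearMap.proj 1 : (Fin 3 → ℝ) →L[ℝ] ℝ)) P := by
      have e : (fun p : Fin 3 → ℝ => p 1 ^ 2) = fun p => p 1 * p 1 := by
        funext p; ring
      rw [e]
      exact (hv.mul hv).congr_fderiv (by ext v; simp [hP1]; ring)
    have hg : HasFDerivAt (fun p : Fin 3 → ℝ => k0 ^ 2 - (p 0) ^ 2 - (p 1) ^ 2)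
        _ P := ((hasFDerivAt_const (k0 ^ 2) P).sub hsq0).sub hsq1
    have hne : (k0 ^ 2 - (P 0) ^ 2 - (P 1) ^ 2) ≠ 0 := by
      rw [hP0, hP1]; exact hKpos.ne'
    refine (hg.sqrt hne).congr_fderiv ?_
    ext v
    have hsq : Real.sqrt (k0 ^ 2 - P 0 ^ 2 - P 1 ^ 2) = κ := by
      rw [hP0, hP1, hκdef]; rfl
    simp [hsq, hP0, hP1]
    have h2 : Real.sqrt (-k1^2 - k2^2 + k0^2) = κ := by
      rw [show -k1^2 - k2^2 + k0^2 = k0^2 - k1^2 - k2^2 by ring]; rfl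
    have h3 : Real.sqrt (k0 ^ 2 - k1 ^ 2 - k2 ^ 2) = κ := rfl
    field_simp [h2, h3]
    try rw [h2]
    try rw [h3]
    ring
  have hh0 : HasFDerivAt (fun p : Fin 3 → ℝ => hpm k0 ε (p 0) (p 1) 0)
      (ContinuousLinearMap.proj 0 : (Fin 3 → ℝ) →L[ℝ] ℝ) P := hu
  have hh1 : HasFDerivAt (fun p : Fin 3 → ℝ => hpm k0 ε (p 0) (p 1) 1)
      (ContinuousLinearMap.proj 1 : (Fin 3 → ℝ) →L[ℝ] ℝ) P := hv
  have hh2 : HasFDerivAt (fun p : Fin 3 → ℝ => hpm k0 ε (p 0) (p 1) 2)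
      (ε • ((-(k1/κ)) • (ContinuousLinearMap.proj 0 : (Fin 3 → ℝ) →L[ℝ] ℝ)
        + (-(k2/κ)) • (ContinuousLinearMap.proj 1 : (Fin 3 → ℝ) →L[ℝ] ℝ))) P :=
    (hKf.const_mul ε).sub_const k0
  have hdot : HasFDerivAt (fun p : Fin 3 → ℝ => dot3 n (hpm k0 ε (p 0) (p 1))) _ P :=
    ((hh0.const_mul (n 0)).add (hh1.const_mul (n 1))).add (hh2.const_mul (n 2))
  have hF : HasFDerivAt (Tmap k0 ε (fun _ => n) α) D P := by
    apply hasFDerivAt_pi''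
    intro i
    fin_cases i
    · show HasFDerivAt (fun p : Fin 3 → ℝ => Tmap k0 ε (fun _ => n) α p 0)
        ((ContinuousLinearMap.proj 0).comp D) P
      have e : (fun p : Fin 3 → ℝ => Tmap k0 ε (fun _ => n) α p 0)
          = fun p : Fin 3 → ℝ =>
            (1 - Real.cos (α (p 2))) * dot3 n (hpm k0 ε (p 0) (p 1)) * n 0
            + Real.cos (α (p 2)) * hpm k0 ε (p 0) (p 1) 0
            - Real.sin (α (p 2)) * (n 1 * hpm k0 ε (p 0) (p 1) 2
                - n 2 * hpm k0 ε (p 0) (p 1) 1) := by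
        funext p; simp [Tmap, rot3, cross3]
      rw [e]
      refine HasFDerivAt.congr_fderiv
        (((((hC.const_sub 1).mul hdot).mul_const (n 0)).add (hC.mul hh0)).sub
          (hS.mul ((hh2.const_mul (n 1)).sub (hh1.const_mul (n 2))))) ?_
      ext v
      simp [hM, hD, dot3, cross3, hpm, hP0, hP1, hP2, ← hκdef, ← hc, ← hs,
        Matrix.toLin'_apply, Matrix.mulVec, dotProduct, Fin.sum_univ_three]
      field_simp
      ring
    · show HasFDerivAt (fun p : Fin 3 → ℝ => Tmap k0 ε (fun _ => n) α p 1)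
        ((ContinuousLinearMap.proj 1).comp D) P
      have e : (fun p : Fin 3 → ℝ => Tmap k0 ε (fun _ => n) α p 1)
          = fun p : Fin 3 → ℝ =>
            (1 - Real.cos (α (p 2))) * dot3 n (hpm k0 ε (p 0) (p 1)) * n 1
            + Real.cos (α (p 2)) * hpm k0 ε (p 0) (p 1) 1
            - Real.sin (α (p 2)) * (n 2 * hpm k0 ε (p 0) (p 1) 0
                - n 0 * hpm k0 ε (p 0) (p 1) 2) := by
        funext p; simp [Tmap, rot3, cross3]
      rw [e]
      refine HasFDerivAt.congr_fderiv
        (((((hC.const_sub 1).mul hdot).mul_const (n 1)).add (hC.mul hh1)).sub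
          (hS.mul ((hh0.const_mul (n 2)).sub (hh2.const_mul (n 0))))) ?_
      ext v
      simp [hM, hD, dot3, cross3, hpm, hP0, hP1, hP2, ← hκdef, ← hc, ← hs,
        Matrix.toLin'_apply, Matrix.mulVec, dotProduct, Fin.sum_univ_three]
      field_simp
      ring
    · show HasFDerivAt (fun p : Fin 3 → ℝ => Tmap k0 ε (fun _ => n) α p 2)
        ((ContinuousLinearMap.proj 2).comp D) P
      have e : (fun p : Fin 3 → ℝ => Tmap k0 ε (fun _ => n) α p 2)
          = fun p : Fin 3 → ℝ =>
            (1 - Real.cos (α (p 2))) * dot3 n (hpm k0 ε (p 0) (p 1)) * n 2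
            + Real.cos (α (p 2)) * hpm k0 ε (p 0) (p 1) 2
            - Real.sin (α (p 2)) * (n 0 * hpm k0 ε (p 0) (p 1) 1
                - n 1 * hpm k0 ε (p 0) (p 1) 0) := by
        funext p; simp [Tmap, rot3, cross3]
      rw [e]
      refine HasFDerivAt.congr_fderiv
        (((((hC.const_sub 1).mul hdot).mul_const (n 2)).add (hC.mul hh2)).sub
          (hS.mul ((hh1.const_mul (n 0)).sub (hh0.const_mul (n 1))))) ?_
      ext v
      simp [hM, hD, dot3, cross3, hpm, hP0, hP1, hP2, ← hκdef, ← hc, ← hs,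
        Matrix.toLin'_apply, Matrix.mulVec, dotProduct, Fin.sum_univ_three]
      field_simp
      ring
  have hdet : M.det = ε * a * k0 * (n 1 * k1 - n 0 * k2) / κ := by
    rw [hM, Matrix.det_fin_three]
    simp only [Matrix.cons_val', Matrix.cons_val_zero, Matrix.cons_val_one,
      Matrix.head_cons, Matrix.empty_val', Matrix.cons_val_fin_one,
      Matrix.head_fin_const, Matrix.of_apply, Matrix.cons_val_two, Matrix.tail_cons]
    rcases hε with rfl | rfl
    · field_simp
      apply mul_left_cancel₀ hκpos.ne'
      linear_combination ((-1)*a*n 1*k0*k1 + a*n 0*k0*k2 + s^2*a*n 1*n 2^2*k0*k1 + s^2*a*n 1^3*k0*k1 + (-1)*s^2*a*n 0*n 2^2*k0*k2 + (-1)*s^2*a*n 0*n 1^2*k0*k2 + s^2*a*n 0^2*n 1*k0*k1 + (-1)*s^2*a*n 0^3*k0*k2 + s^3*a*n 2^2*k2^2 + s^3*a*n 2^2*k1^2 + (-1)*s^3*a*n 2^2*k0^2 + (-1)*s^3*a*n 2^4*k2^2 + (-1)*s^3*a*n 2^4*k1^2 + s^3*a*n 2^4*k0^2 + s^3*a*n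 1*n 2*k0*k2 + (-1)*s^3*a*n 1*n 2^3*k0*k2 + (-1)*s^3*a*n 1^2*k2^2 + (-1)*s^3*a*n 1^2*n 2^2*k1^2 + s^3*a*n 1^2*n 2^2*k0^2 + (-1)*s^3*a*n 1^3*n 2*k0*k2 + s^3*a*n 1^4*k2^2 + s^3*a*n 0*n 2*k0*k1 + (-1)*s^3*a*n 0*n 2^3*k0*k1 + (-2)*s^3*a*n 0*n 1*k1*k2 + 2*s^3*a*n 0*n 1*n 2^2*k1*k2 + (-1)*s^3*a*n 0*n 1^2*n 2*k0*k1 + 2*s^3*a*n 0*n 1^3*k1*k2 + (-1)*s^3*a*n 0^2*k1^2 + (-1)*s^3*a*n 0^2*n 2^2*k2^2 + s^3*a*n 0^2*n 2^2*k0^2 + (-1)*s^3*a*n 0^2*n 1*n 2*k0*k2 + s^3*a*n 0^2*n 1^2*k2^2 + s^3*a*n 0^2*n 1^2*k1^2 + (-1)*s^3*a*n 0^3*n 2*k0*k1 + 2*s^3*a*n 0^3*n 1*k1*k2 + s^3*a*n 0^4*k1^2 + (-1)*c*s*a*n 2^2*k2^2 + (-1)*c*s*a*n 2^2*k1^2 +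 c*s*a*n 2^4*k2^2 + c*s*a*n 2^4*k1^2 + (-1)*c*s*a*n 1*n 2*k0*k2 + c*s*a*n 1*n 2^3*k0*k2 + c*s*a*n 1^2*k2^2 + (-1)*c*s*a*n 1^2*k0^2 + c*s*a*n 1^2*n 2^2*k1^2 + c*s*a*n 1^2*n 2^2*k0^2 + c*s*a*n 1^3*n 2*k0*k2 + (-1)*c*s*a*n 1^4*k2^2 + c*s*a*n 1^4*k0^2 + (-1)*c*s*a*n 0*n 2*k0*k1 + c*s*a*n 0*n 2^3*k0*k1 + 2*c*s*a*n 0*n 1*k1*k2 + (-2)*c*s*a*n 0*n 1*n 2^2*k1*k2 + c*s*a*n 0*n 1^2*n 2*k0*k1 + (-2)*c*s*a*n 0*n 1^3*k1*k2 + c*s*a*n 0^2*k1^2 + (-1)*c*s*a*n 0^2*k0^2 + c*s*a*n 0^2*n 2^2*k2^2 + c*s*a*n 0^2*n 2^2*k0^2 + c*s*a*n 0^2*n 1*n 2*k0*k2 + (-1)*c*s*a*n 0^2*n 1^2*k2^2 + (-1)*c*s*a*n 0^2*n 1^2*k1^2 + 2*c*s*a*n 0^2*n 1^2*k0^2 +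 c*s*a*n 0^3*n 2*k0*k1 + (-2)*c*s*a*n 0^3*n 1*k1*k2 + (-1)*c*s*a*n 0^4*k1^2 + c*s*a*n 0^4*k0^2 + c*s^2*a*n 1*k0*k1 + (-1)*c*s^2*a*n 1*n 2^2*k0*k1 + (-1)*c*s^2*a*n 1^3*k0*k1 + (-1)*c*s^2*a*n 0*k0*k2 + c*s^2*a*n 0*n 2^2*k0*k2 + c*s^2*a*n 0*n 1^2*k0*k2 + (-1)*c*s^2*a*n 0^2*n 1*k0*k1 + c*s^2*a*n 0^3*k0*k2 + c^2*a*n 1*n 2^2*k0*k1 + c^2*a*n 1^3*k0*k1 + (-1)*c^2*a*n 0*n 2^2*k0*k2 + (-1)*c^2*a*n 0*n 1^2*k0*k2 + c^2*a*n 0^2*n 1*k0*k1 + (-1)*c^2*a*n 0^3*k0*k2 + (-1)*c^2*s*a*k0^2 + c^2*s*a*n 2^2*k2^2 + c^2*s*a*n 2^2*k1^2 + c^2*s*a*n 2^2*k0^2 + (-1)*c^2*s*a*n 2^4*k2^2 + (-1)*c^2*s*a*n 2^4*k1^2 + c^2*s*a*n 1*n 2*k0*k2 + (-1)*c^2*s*a*n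 1*n 2^3*k0*k2 + (-1)*c^2*s*a*n 1^2*k2^2 + 2*c^2*s*a*n 1^2*k0^2 + (-1)*c^2*s*a*n 1^2*n 2^2*k1^2 + (-1)*c^2*s*a*n 1^2*n 2^2*k0^2 + (-1)*c^2*s*a*n 1^3*n 2*k0*k2 + c^2*s*a*n 1^4*k2^2 + (-1)*c^2*s*a*n 1^4*k0^2 + c^2*s*a*n 0*n 2*k0*k1 + (-1)*c^2*s*a*n 0*n 2^3*k0*k1 + (-2)*c^2*s*a*n 0*n 1*k1*k2 + 2*c^2*s*a*n 0*n 1*n 2^2*k1*k2 + (-1)*c^2*s*a*n 0*n 1^2*n 2*k0*k1 + 2*c^2*s*a*n 0*n 1^3*k1*k2 + (-1)*c^2*s*a*n 0^2*k1^2 + 2*c^2*s*a*n 0^2*k0^2 + (-1)*c^2*s*a*n 0^2*n 2^2*k2^2 + (-1)*c^2*s*a*n 0^2*n 2^2*k0^2 + (-1)*c^2*s*a*n 0^2*n 1*n 2*k0*k2 + c^2*s*a*n 0^2*n 1^2*k2^2 + c^2*s*a*n 0^2*n 1^2*k1^2 + (-2)*c^2*s*a*n 0^2*n 1^2*k0^2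 + (-1)*c^2*s*a*n 0^3*n 2*k0*k1 + 2*c^2*s*a*n 0^3*n 1*k1*k2 + c^2*s*a*n 0^4*k1^2 + (-1)*c^2*s*a*n 0^4*k0^2 + c^3*a*n 1*k0*k1 + (-1)*c^3*a*n 1*n 2^2*k0*k1 + (-1)*c^3*a*n 1^3*k0*k1 + (-1)*c^3*a*n 0*k0*k2 + c^3*a*n 0*n 2^2*k0*k2 + c^3*a*n 0*n 1^2*k0*k2 + (-1)*c^3*a*n 0^2*n 1*k0*k1 + c^3*a*n 0^3*k0*k2 + κ*s^3*a*n 2^2*k0 + (-1)*κ*s^3*a*n 2^4*k0 + (-2)*κ*s^3*a*n 1*n 2*k2 + 2*κ*s^3*a*n 1*n 2^3*k2 + (-1)*κ*s^3*a*n 1^2*n 2^2*k0 + 2*κ*s^3*a*n 1^3*n 2*k2 + (-2)*κ*s^3*a*n 0*n 2*k1 + 2*κ*s^3*a*n 0*n 2^3*k1 + 2*κ*s^3*a*n 0*n 1^2*n 2*k1 + (-1)*κ*s^3*a*n 0^2*n 2^2*k0 + 2*κ*s^3*a*n 0^2*n 1*n 2*k2 + 2*κ*s^3*a*n 0^3*n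 2*k1 + 2*κ*c*s*a*n 1*n 2*k2 + (-2)*κ*c*s*a*n 1*n 2^3*k2 + κ*c*s*a*n 1^2*k0 + (-1)*κ*c*s*a*n 1^2*n 2^2*k0 + (-2)*κ*c*s*a*n 1^3*n 2*k2 + (-1)*κ*c*s*a*n 1^4*k0 + 2*κ*c*s*a*n 0*n 2*k1 + (-2)*κ*c*s*a*n 0*n 2^3*k1 + (-2)*κ*c*s*a*n 0*n 1^2*n 2*k1 + κ*c*s*a*n 0^2*k0 + (-1)*κ*c*s*a*n 0^2*n 2^2*k0 + (-2)*κ*c*s*a*n 0^2*n 1*n 2*k2 + (-2)*κ*c*s*a*n 0^2*n 1^2*k0 + (-2)*κ*c*s*a*n 0^3*n 2*k1 + (-1)*κ*c*s*a*n 0^4*k0 + κ*c^2*s*a*k0 + (-1)*κ*c^2*s*a*n 2^2*k0 + (-2)*κ*c^2*s*a*n 1*n 2*k2 + 2*κ*c^2*s*a*n 1*n 2^3*k2 + (-2)*κ*c^2*s*a*n 1^2*k0 + κ*c^2*s*a*n 1^2*n 2^2*k0 + 2*κ*c^2*s*a*n 1^3*n 2*k2 + κ*c^2*s*a*n 1^4*k0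 + (-2)*κ*c^2*s*a*n 0*n 2*k1 + 2*κ*c^2*s*a*n 0*n 2^3*k1 + 2*κ*c^2*s*a*n 0*n 1^2*n 2*k1 + (-2)*κ*c^2*s*a*n 0^2*k0 + κ*c^2*s*a*n 0^2*n 2^2*k0 + 2*κ*c^2*s*a*n 0^2*n 1*n 2*k2 + 2*κ*c^2*s*a*n 0^2*n 1^2*k0 + 2*κ*c^2*s*a*n 0^3*n 2*k1 + κ*c^2*s*a*n 0^4*k0 + (-1)*κ^2*s^3*a*n 2^2 + κ^2*s^3*a*n 2^4 + κ^2*s^3*a*n 1^2*n 2^2 + κ^2*s^3*a*n 0^2*n 2^2 + (-1)*κ^2*c*s*a*n 1^2 + κ^2*c*s*a*n 1^2*n 2^2 + κ^2*c*s*a*n 1^4 + (-1)*κ^2*c*s*a*n 0^2 + κ^2*c*s*a*n 0^2*n 2^2 + 2*κ^2*c*s*a*n 0^2*n 1^2 + κ^2*c*s*a*n 0^4 + (-1)*κ^2*c^2*s*a + κ^2*c^2*s*a*n 2^2 + 2*κ^2*c^2*s*a*n 1^2 + (-1)*κ^2*c^2*s*a*n 1^2*n 2^2 + (-1)*κ^2*c^2*s*a*n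 1^4 + 2*κ^2*c^2*s*a*n 0^2 + (-1)*κ^2*c^2*s*a*n 0^2*n 2^2 + (-2)*κ^2*c^2*s*a*n 0^2*n 1^2 + (-1)*κ^2*c^2*s*a*n 0^4) * hκ2 + ((-1)*a*n 1*n 2^2*k0*k1*k2^2 + (-1)*a*n 1*n 2^2*k0*k1^3 + a*n 1*n 2^2*k0^3*k1 + (-1)*a*n 1^3*k0*k1*k2^2 + (-1)*a*n 1^3*k0*k1^3 + a*n 1^3*k0^3*k1 + a*n 0*n 2^2*k0*k2^3 + a*n 0*n 2^2*k0*k1^2*k2 + (-1)*a*n 0*n 2^2*k0^3*k2 + a*n 0*n 1^2*k0*k2^3 + a*n 0*n 1^2*k0*k1^2*k2 + (-1)*a*n 0*n 1^2*k0^3*k2 + (-1)*a*n 0^2*n 1*k0*k1*k2^2 + (-1)*a*n 0^2*n 1*k0*k1^3 + a*n 0^2*n 1*k0^3*k1 + a*n 0^3*k0*k2^3 + a*n 0^3*k0*k1^2*k2 + (-1)*a*n 0^3*k0^3*k2 + (-1)*s*a*n 2^2*k2^4 + (-2)*s*a*n 2^2*k1^2*k2^2 + (-1)*s*a*n 2^2*k1^4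 + 2*s*a*n 2^2*k0^2*k2^2 + 2*s*a*n 2^2*k0^2*k1^2 + (-1)*s*a*n 2^2*k0^4 + s*a*n 2^4*k2^4 + 2*s*a*n 2^4*k1^2*k2^2 + s*a*n 2^4*k1^4 + (-2)*s*a*n 2^4*k0^2*k2^2 + (-2)*s*a*n 2^4*k0^2*k1^2 + s*a*n 2^4*k0^4 + (-1)*s*a*n 1*n 2*k0*k2^3 + (-1)*s*a*n 1*n 2*k0*k1^2*k2 + s*a*n 1*n 2*k0^3*k2 + s*a*n 1*n 2^3*k0*k2^3 + s*a*n 1*n 2^3*k0*k1^2*k2 + (-1)*s*a*n 1*n 2^3*k0^3*k2 + s*a*n 1^2*k2^4 + s*a*n 1^2*k1^2*k2^2 + (-1)*s*a*n 1^2*k0^2*k2^2 + s*a*n 1^2*n 2^2*k1^2*k2^2 + s*a*n 1^2*n 2^2*k1^4 + (-1)*s*a*n 1^2*n 2^2*k0^2*k2^2 + (-2)*s*a*n 1^2*n 2^2*k0^2*k1^2 + s*a*n 1^2*n 2^2*k0^4 + s*a*n 1^3*n 2*k0*k2^3 + s*a*n 1^3*n 2*k0*k1^2*k2 + (-1)*s*a*n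 1^3*n 2*k0^3*k2 + (-1)*s*a*n 1^4*k2^4 + (-1)*s*a*n 1^4*k1^2*k2^2 + s*a*n 1^4*k0^2*k2^2 + (-1)*s*a*n 0*n 2*k0*k1*k2^2 + (-1)*s*a*n 0*n 2*k0*k1^3 + s*a*n 0*n 2*k0^3*k1 + s*a*n 0*n 2^3*k0*k1*k2^2 + s*a*n 0*n 2^3*k0*k1^3 + (-1)*s*a*n 0*n 2^3*k0^3*k1 + 2*s*a*n 0*n 1*k1*k2^3 + 2*s*a*n 0*n 1*k1^3*k2 + (-2)*s*a*n 0*n 1*k0^2*k1*k2 + (-2)*s*a*n 0*n 1*n 2^2*k1*k2^3 + (-2)*s*a*n 0*n 1*n 2^2*k1^3*k2 + 2*s*a*n 0*n 1*n 2^2*k0^2*k1*k2 + s*a*n 0*n 1^2*n 2*k0*k1*k2^2 + s*a*n 0*n 1^2*n 2*k0*k1^3 + (-1)*s*a*n 0*n 1^2*n 2*k0^3*k1 + (-2)*s*a*n 0*n 1^3*k1*k2^3 + (-2)*s*a*n 0*n 1^3*k1^3*k2 + 2*s*a*n 0*n 1^3*k0^2*k1*k2 + s*a*n 0^2*k1^2*k2^2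 + s*a*n 0^2*k1^4 + (-1)*s*a*n 0^2*k0^2*k1^2 + s*a*n 0^2*n 2^2*k2^4 + s*a*n 0^2*n 2^2*k1^2*k2^2 + (-2)*s*a*n 0^2*n 2^2*k0^2*k2^2 + (-1)*s*a*n 0^2*n 2^2*k0^2*k1^2 + s*a*n 0^2*n 2^2*k0^4 + s*a*n 0^2*n 1*n 2*k0*k2^3 + s*a*n 0^2*n 1*n 2*k0*k1^2*k2 + (-1)*s*a*n 0^2*n 1*n 2*k0^3*k2 + (-1)*s*a*n 0^2*n 1^2*k2^4 + (-2)*s*a*n 0^2*n 1^2*k1^2*k2^2 + (-1)*s*a*n 0^2*n 1^2*k1^4 + s*a*n 0^2*n 1^2*k0^2*k2^2 + s*a*n 0^2*n 1^2*k0^2*k1^2 + s*a*n 0^3*n 2*k0*k1*k2^2 + s*a*n 0^3*n 2*k0*k1^3 + (-1)*s*a*n 0^3*n 2*k0^3*k1 + (-2)*s*a*n 0^3*n 1*k1*k2^3 + (-2)*s*a*n 0^3*n 1*k1^3*k2 + 2*s*a*n 0^3*n 1*k0^2*k1*k2 + (-1)*s*a*n 0^4*k1^2*k2^2 + (-1)*s*a*n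 0^4*k1^4 + s*a*n 0^4*k0^2*k1^2 + (-1)*c*a*n 1*k0*k1*k2^2 + (-1)*c*a*n 1*k0*k1^3 + c*a*n 1*k0^3*k1 + c*a*n 1*n 2^2*k0*k1*k2^2 + c*a*n 1*n 2^2*k0*k1^3 + (-1)*c*a*n 1*n 2^2*k0^3*k1 + c*a*n 1^3*k0*k1*k2^2 + c*a*n 1^3*k0*k1^3 + (-1)*c*a*n 1^3*k0^3*k1 + c*a*n 0*k0*k2^3 + c*a*n 0*k0*k1^2*k2 + (-1)*c*a*n 0*k0^3*k2 + (-1)*c*a*n 0*n 2^2*k0*k2^3 + (-1)*c*a*n 0*n 2^2*k0*k1^2*k2 + c*a*n 0*n 2^2*k0^3*k2 + (-1)*c*a*n 0*n 1^2*k0*k2^3 + (-1)*c*a*n 0*n 1^2*k0*k1^2*k2 + c*a*n 0*n 1^2*k0^3*k2 + c*a*n 0^2*n 1*k0*k1*k2^2 + c*a*n 0^2*n 1*k0*k1^3 + (-1)*c*a*n 0^2*n 1*k0^3*k1 + (-1)*c*a*n 0^3*k0*k2^3 + (-1)*c*a*n 0^3*k0*k1^2*k2 + c*a*n 0^3*k0^3*k2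 + (-1)*κ*s*a*n 2^2*k0*k2^2 + (-1)*κ*s*a*n 2^2*k0*k1^2 + κ*s*a*n 2^2*k0^3 + κ*s*a*n 2^4*k0*k2^2 + κ*s*a*n 2^4*k0*k1^2 + (-1)*κ*s*a*n 2^4*k0^3 + 2*κ*s*a*n 1*n 2*k2^3 + 2*κ*s*a*n 1*n 2*k1^2*k2 + (-2)*κ*s*a*n 1*n 2*k0^2*k2 + (-2)*κ*s*a*n 1*n 2^3*k2^3 + (-2)*κ*s*a*n 1*n 2^3*k1^2*k2 + 2*κ*s*a*n 1*n 2^3*k0^2*k2 + κ*s*a*n 1^2*n 2^2*k0*k2^2 + κ*s*a*n 1^2*n 2^2*k0*k1^2 + (-1)*κ*s*a*n 1^2*n 2^2*k0^3 + (-2)*κ*s*a*n 1^3*n 2*k2^3 + (-2)*κ*s*a*n 1^3*n 2*k1^2*k2 + 2*κ*s*a*n 1^3*n 2*k0^2*k2 + 2*κ*s*a*n 0*n 2*k1*k2^2 + 2*κ*s*a*n 0*n 2*k1^3 + (-2)*κ*s*a*n 0*n 2*k0^2*k1 + (-2)*κ*s*a*n 0*n 2^3*k1*k2^2 + (-2)*κ*s*a*n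 0*n 2^3*k1^3 + 2*κ*s*a*n 0*n 2^3*k0^2*k1 + (-2)*κ*s*a*n 0*n 1^2*n 2*k1*k2^2 + (-2)*κ*s*a*n 0*n 1^2*n 2*k1^3 + 2*κ*s*a*n 0*n 1^2*n 2*k0^2*k1 + κ*s*a*n 0^2*n 2^2*k0*k2^2 + κ*s*a*n 0^2*n 2^2*k0*k1^2 + (-1)*κ*s*a*n 0^2*n 2^2*k0^3 + (-2)*κ*s*a*n 0^2*n 1*n 2*k2^3 + (-2)*κ*s*a*n 0^2*n 1*n 2*k1^2*k2 + 2*κ*s*a*n 0^2*n 1*n 2*k0^2*k2 + (-2)*κ*s*a*n 0^3*n 2*k1*k2^2 + (-2)*κ*s*a*n 0^3*n 2*k1^3 + 2*κ*s*a*n 0^3*n 2*k0^2*k1) * hsc + ((-1)*a*n 1*k0*k1*k2^2 + (-1)*a*n 1*k0*k1^3 + a*n 1*k0^3*k1 + a*n 0*k0*k2^3 + a*n 0*k0*k1^2*k2 + (-1)*a*n 0*k0^3*k2 + s*a*n 2^2*k2^4 + 2*s*a*n 2^2*k1^2*k2^2 + s*a*n 2^2*k1^4 + (-2)*s*a*n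 2^2*k0^2*k2^2 + (-2)*s*a*n 2^2*k0^2*k1^2 + s*a*n 2^2*k0^4 + s*a*n 1*n 2*k0*k2^3 + s*a*n 1*n 2*k0*k1^2*k2 + (-1)*s*a*n 1*n 2*k0^3*k2 + (-1)*s*a*n 1^2*k2^4 + (-1)*s*a*n 1^2*k1^2*k2^2 + s*a*n 1^2*k0^2*k2^2 + s*a*n 0*n 2*k0*k1*k2^2 + s*a*n 0*n 2*k0*k1^3 + (-1)*s*a*n 0*n 2*k0^3*k1 + (-2)*s*a*n 0*n 1*k1*k2^3 + (-2)*s*a*n 0*n 1*k1^3*k2 + 2*s*a*n 0*n 1*k0^2*k1*k2 + (-1)*s*a*n 0^2*k1^2*k2^2 + (-1)*s*a*n 0^2*k1^4 + s*a*n 0^2*k0^2*k1^2 + c*a*n 1*k0*k1*k2^2 + c*a*n 1*k0*k1^3 + (-1)*c*a*n 1*k0^3*k1 + (-1)*c*a*n 0*k0*k2^3 + (-1)*c*a*n 0*k0*k1^2*k2 + c*a*n 0*k0^3*k2 + (-1)*c*s*a*n 2^2*k2^4 + (-2)*c*s*a*n 2^2*k1^2*k2^2 + (-1)*c*s*a*n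 2^2*k1^4 + c*s*a*n 2^2*k0^2*k2^2 + c*s*a*n 2^2*k0^2*k1^2 + (-1)*c*s*a*n 1*n 2*k0*k2^3 + (-1)*c*s*a*n 1*n 2*k0*k1^2*k2 + c*s*a*n 1*n 2*k0^3*k2 + c*s*a*n 1^2*k2^4 + c*s*a*n 1^2*k1^2*k2^2 + (-2)*c*s*a*n 1^2*k0^2*k2^2 + (-1)*c*s*a*n 1^2*k0^2*k1^2 + c*s*a*n 1^2*k0^4 + (-1)*c*s*a*n 0*n 2*k0*k1*k2^2 + (-1)*c*s*a*n 0*n 2*k0*k1^3 + c*s*a*n 0*n 2*k0^3*k1 + 2*c*s*a*n 0*n 1*k1*k2^3 + 2*c*s*a*n 0*n 1*k1^3*k2 + (-2)*c*s*a*n 0*n 1*k0^2*k1*k2 + c*s*a*n 0^2*k1^2*k2^2 + c*s*a*n 0^2*k1^4 + (-1)*c*s*a*n 0^2*k0^2*k2^2 + (-2)*c*s*a*n 0^2*k0^2*k1^2 + c*s*a*n 0^2*k0^4 + (-1)*c^2*s*a*k0^2*k2^2 + (-1)*c^2*s*a*k0^2*k1^2 + c^2*s*a*k0^4 + c^2*s*a*n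 2^2*k0^2*k2^2 + c^2*s*a*n 2^2*k0^2*k1^2 + (-1)*c^2*s*a*n 2^2*k0^4 + c^2*s*a*n 1^2*k0^2*k2^2 + c^2*s*a*n 1^2*k0^2*k1^2 + (-1)*c^2*s*a*n 1^2*k0^4 + c^2*s*a*n 0^2*k0^2*k2^2 + c^2*s*a*n 0^2*k0^2*k1^2 + (-1)*c^2*s*a*n 0^2*k0^4 + κ*s*a*n 2^2*k0*k2^2 + κ*s*a*n 2^2*k0*k1^2 + (-1)*κ*s*a*n 2^2*k0^3 + (-2)*κ*s*a*n 1*n 2*k2^3 + (-2)*κ*s*a*n 1*n 2*k1^2*k2 + 2*κ*s*a*n 1*n 2*k0^2*k2 + (-2)*κ*s*a*n 0*n 2*k1*k2^2 + (-2)*κ*s*a*n 0*n 2*k1^3 + 2*κ*s*a*n 0*n 2*k0^2*k1 + 2*κ*c*s*a*n 1*n 2*k2^3 + 2*κ*c*s*a*n 1*n 2*k1^2*k2 + (-2)*κ*c*s*a*n 1*n 2*k0^2*k2 + κ*c*s*a*n 1^2*k0*k2^2 + κ*c*s*a*n 1^2*k0*k1^2 + (-1)*κ*c*s*a*n 1^2*k0^3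 + 2*κ*c*s*a*n 0*n 2*k1*k2^2 + 2*κ*c*s*a*n 0*n 2*k1^3 + (-2)*κ*c*s*a*n 0*n 2*k0^2*k1 + κ*c*s*a*n 0^2*k0*k2^2 + κ*c*s*a*n 0^2*k0*k1^2 + (-1)*κ*c*s*a*n 0^2*k0^3 + κ*c^2*s*a*k0*k2^2 + κ*c^2*s*a*k0*k1^2 + (-1)*κ*c^2*s*a*k0^3 + (-1)*κ*c^2*s*a*n 2^2*k0*k2^2 + (-1)*κ*c^2*s*a*n 2^2*k0*k1^2 + κ*c^2*s*a*n 2^2*k0^3 + (-1)*κ*c^2*s*a*n 1^2*k0*k2^2 + (-1)*κ*c^2*s*a*n 1^2*k0*k1^2 + κ*c^2*s*a*n 1^2*k0^3 + (-1)*κ*c^2*s*a*n 0^2*k0*k2^2 + (-1)*κ*c^2*s*a*n 0^2*k0*k1^2 + κ*c^2*s*a*n 0^2*k0^3) * hn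
    · field_simp
      apply mul_left_cancel₀ hκpos.ne'
      linear_combination (a*n 1*k0*k1 + (-1)*a*n 0*k0*k2 + (-1)*s^2*a*n 1*n 2^2*k0*k1 + (-1)*s^2*a*n 1^3*k0*k1 + s^2*a*n 0*n 2^2*k0*k2 + s^2*a*n 0*n 1^2*k0*k2 + (-1)*s^2*a*n 0^2*n 1*k0*k1 + s^2*a*n 0^3*k0*k2 + (-1)*s^3*a*n 2^2*k2^2 + (-1)*s^3*a*n 2^2*k1^2 + s^3*a*n 2^2*k0^2 + s^3*a*n 2^4*k2^2 + s^3*a*n 2^4*k1^2 + (-1)*s^3*a*n 2^4*k0^2 + (-1)*s^3*a*n 1*n 2*k0*k2 + s^3*a*n 1*n 2^3*k0*k2 + s^3*a*n 1^2*k2^2 + s^3*a*n 1^2*n 2^2*k1^2 + (-1)*s^3*a*n 1^2*n 2^2*k0^2 + s^3*a*n 1^3*n 2*k0*k2 + (-1)*s^3*a*n 1^4*k2^2 + (-1)*s^3*a*n 0*n 2*k0*k1 + s^3*a*n 0*n 2^3*k0*k1 + 2*s^3*a*n 0*n 1*k1*k2 + (-2)*s^3*a*n 0*n 1*n 2^2*k1*k2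 + s^3*a*n 0*n 1^2*n 2*k0*k1 + (-2)*s^3*a*n 0*n 1^3*k1*k2 + s^3*a*n 0^2*k1^2 + s^3*a*n 0^2*n 2^2*k2^2 + (-1)*s^3*a*n 0^2*n 2^2*k0^2 + s^3*a*n 0^2*n 1*n 2*k0*k2 + (-1)*s^3*a*n 0^2*n 1^2*k2^2 + (-1)*s^3*a*n 0^2*n 1^2*k1^2 + s^3*a*n 0^3*n 2*k0*k1 + (-2)*s^3*a*n 0^3*n 1*k1*k2 + (-1)*s^3*a*n 0^4*k1^2 + c*s*a*n 2^2*k2^2 + c*s*a*n 2^2*k1^2 + (-1)*c*s*a*n 2^4*k2^2 + (-1)*c*s*a*n 2^4*k1^2 + c*s*a*n 1*n 2*k0*k2 + (-1)*c*s*a*n 1*n 2^3*k0*k2 + (-1)*c*s*a*n 1^2*k2^2 + c*s*a*n 1^2*k0^2 + (-1)*c*s*a*n 1^2*n 2^2*k1^2 + (-1)*c*s*a*n 1^2*n 2^2*k0^2 + (-1)*c*s*a*n 1^3*n 2*k0*k2 + c*s*a*n 1^4*k2^2 + (-1)*c*s*a*n 1^4*k0^2 + c*s*a*n 0*n 2*k0*k1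 + (-1)*c*s*a*n 0*n 2^3*k0*k1 + (-2)*c*s*a*n 0*n 1*k1*k2 + 2*c*s*a*n 0*n 1*n 2^2*k1*k2 + (-1)*c*s*a*n 0*n 1^2*n 2*k0*k1 + 2*c*s*a*n 0*n 1^3*k1*k2 + (-1)*c*s*a*n 0^2*k1^2 + c*s*a*n 0^2*k0^2 + (-1)*c*s*a*n 0^2*n 2^2*k2^2 + (-1)*c*s*a*n 0^2*n 2^2*k0^2 + (-1)*c*s*a*n 0^2*n 1*n 2*k0*k2 + c*s*a*n 0^2*n 1^2*k2^2 + c*s*a*n 0^2*n 1^2*k1^2 + (-2)*c*s*a*n 0^2*n 1^2*k0^2 + (-1)*c*s*a*n 0^3*n 2*k0*k1 + 2*c*s*a*n 0^3*n 1*k1*k2 + c*s*a*n 0^4*k1^2 + (-1)*c*s*a*n 0^4*k0^2 + (-1)*c*s^2*a*n 1*k0*k1 + c*s^2*a*n 1*n 2^2*k0*k1 + c*s^2*a*n 1^3*k0*k1 + c*s^2*a*n 0*k0*k2 + (-1)*c*s^2*a*n 0*n 2^2*k0*k2 + (-1)*c*s^2*a*n 0*n 1^2*k0*k2 + c*s^2*a*n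 0^2*n 1*k0*k1 + (-1)*c*s^2*a*n 0^3*k0*k2 + (-1)*c^2*a*n 1*n 2^2*k0*k1 + (-1)*c^2*a*n 1^3*k0*k1 + c^2*a*n 0*n 2^2*k0*k2 + c^2*a*n 0*n 1^2*k0*k2 + (-1)*c^2*a*n 0^2*n 1*k0*k1 + c^2*a*n 0^3*k0*k2 + c^2*s*a*k0^2 + (-1)*c^2*s*a*n 2^2*k2^2 + (-1)*c^2*s*a*n 2^2*k1^2 + (-1)*c^2*s*a*n 2^2*k0^2 + c^2*s*a*n 2^4*k2^2 + c^2*s*a*n 2^4*k1^2 + (-1)*c^2*s*a*n 1*n 2*k0*k2 + c^2*s*a*n 1*n 2^3*k0*k2 + c^2*s*a*n 1^2*k2^2 + (-2)*c^2*s*a*n 1^2*k0^2 + c^2*s*a*n 1^2*n 2^2*k1^2 + c^2*s*a*n 1^2*n 2^2*k0^2 + c^2*s*a*n 1^3*n 2*k0*k2 + (-1)*c^2*s*a*n 1^4*k2^2 + c^2*s*a*n 1^4*k0^2 + (-1)*c^2*s*a*n 0*n 2*k0*k1 + c^2*s*a*n 0*n 2^3*k0*k1 + 2*c^2*s*a*n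 0*n 1*k1*k2 + (-2)*c^2*s*a*n 0*n 1*n 2^2*k1*k2 + c^2*s*a*n 0*n 1^2*n 2*k0*k1 + (-2)*c^2*s*a*n 0*n 1^3*k1*k2 + c^2*s*a*n 0^2*k1^2 + (-2)*c^2*s*a*n 0^2*k0^2 + c^2*s*a*n 0^2*n 2^2*k2^2 + c^2*s*a*n 0^2*n 2^2*k0^2 + c^2*s*a*n 0^2*n 1*n 2*k0*k2 + (-1)*c^2*s*a*n 0^2*n 1^2*k2^2 + (-1)*c^2*s*a*n 0^2*n 1^2*k1^2 + 2*c^2*s*a*n 0^2*n 1^2*k0^2 + c^2*s*a*n 0^3*n 2*k0*k1 + (-2)*c^2*s*a*n 0^3*n 1*k1*k2 + (-1)*c^2*s*a*n 0^4*k1^2 + c^2*s*a*n 0^4*k0^2 + (-1)*c^3*a*n 1*k0*k1 + c^3*a*n 1*n 2^2*k0*k1 + c^3*a*n 1^3*k0*k1 + c^3*a*n 0*k0*k2 + (-1)*c^3*a*n 0*n 2^2*k0*k2 + (-1)*c^3*a*n 0*n 1^2*k0*k2 + c^3*a*n 0^2*n 1*k0*k1 + (-1)*c^3*a*n 0^3*k0*k2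 + κ*s^3*a*n 2^2*k0 + (-1)*κ*s^3*a*n 2^4*k0 + (-2)*κ*s^3*a*n 1*n 2*k2 + 2*κ*s^3*a*n 1*n 2^3*k2 + (-1)*κ*s^3*a*n 1^2*n 2^2*k0 + 2*κ*s^3*a*n 1^3*n 2*k2 + (-2)*κ*s^3*a*n 0*n 2*k1 + 2*κ*s^3*a*n 0*n 2^3*k1 + 2*κ*s^3*a*n 0*n 1^2*n 2*k1 + (-1)*κ*s^3*a*n 0^2*n 2^2*k0 + 2*κ*s^3*a*n 0^2*n 1*n 2*k2 + 2*κ*s^3*a*n 0^3*n 2*k1 + 2*κ*c*s*a*n 1*n 2*k2 + (-2)*κ*c*s*a*n 1*n 2^3*k2 + κ*c*s*a*n 1^2*k0 + (-1)*κ*c*s*a*n 1^2*n 2^2*k0 + (-2)*κ*c*s*a*n 1^3*n 2*k2 + (-1)*κ*c*s*a*n 1^4*k0 + 2*κ*c*s*a*n 0*n 2*k1 + (-2)*κ*c*s*a*n 0*n 2^3*k1 + (-2)*κ*c*s*a*n 0*n 1^2*n 2*k1 + κ*c*s*a*n 0^2*k0 + (-1)*κ*c*s*a*n 0^2*n 2^2*k0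 + (-2)*κ*c*s*a*n 0^2*n 1*n 2*k2 + (-2)*κ*c*s*a*n 0^2*n 1^2*k0 + (-2)*κ*c*s*a*n 0^3*n 2*k1 + (-1)*κ*c*s*a*n 0^4*k0 + κ*c^2*s*a*k0 + (-1)*κ*c^2*s*a*n 2^2*k0 + (-2)*κ*c^2*s*a*n 1*n 2*k2 + 2*κ*c^2*s*a*n 1*n 2^3*k2 + (-2)*κ*c^2*s*a*n 1^2*k0 + κ*c^2*s*a*n 1^2*n 2^2*k0 + 2*κ*c^2*s*a*n 1^3*n 2*k2 + κ*c^2*s*a*n 1^4*k0 + (-2)*κ*c^2*s*a*n 0*n 2*k1 + 2*κ*c^2*s*a*n 0*n 2^3*k1 + 2*κ*c^2*s*a*n 0*n 1^2*n 2*k1 + (-2)*κ*c^2*s*a*n 0^2*k0 + κ*c^2*s*a*n 0^2*n 2^2*k0 + 2*κ*c^2*s*a*n 0^2*n 1*n 2*k2 + 2*κ*c^2*s*a*n 0^2*n 1^2*k0 + 2*κ*c^2*s*a*n 0^3*n 2*k1 + κ*c^2*s*a*n 0^4*k0 + κ^2*s^3*a*n 2^2 + (-1)*κ^2*s^3*a*n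 2^4 + (-1)*κ^2*s^3*a*n 1^2*n 2^2 + (-1)*κ^2*s^3*a*n 0^2*n 2^2 + κ^2*c*s*a*n 1^2 + (-1)*κ^2*c*s*a*n 1^2*n 2^2 + (-1)*κ^2*c*s*a*n 1^4 + κ^2*c*s*a*n 0^2 + (-1)*κ^2*c*s*a*n 0^2*n 2^2 + (-2)*κ^2*c*s*a*n 0^2*n 1^2 + (-1)*κ^2*c*s*a*n 0^4 + κ^2*c^2*s*a + (-1)*κ^2*c^2*s*a*n 2^2 + (-2)*κ^2*c^2*s*a*n 1^2 + κ^2*c^2*s*a*n 1^2*n 2^2 + κ^2*c^2*s*a*n 1^4 + (-2)*κ^2*c^2*s*a*n 0^2 + κ^2*c^2*s*a*n 0^2*n 2^2 + 2*κ^2*c^2*s*a*n 0^2*n 1^2 + κ^2*c^2*s*a*n 0^4) * hκ2 + (a*n 1*n 2^2*k0*k1*k2^2 + a*n 1*n 2^2*k0*k1^3 + (-1)*a*n 1*n 2^2*k0^3*k1 + a*n 1^3*k0*k1*k2^2 + a*n 1^3*k0*k1^3 + (-1)*a*n 1^3*k0^3*k1 + (-1)*a*n 0*n 2^2*k0*k2^3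 + (-1)*a*n 0*n 2^2*k0*k1^2*k2 + a*n 0*n 2^2*k0^3*k2 + (-1)*a*n 0*n 1^2*k0*k2^3 + (-1)*a*n 0*n 1^2*k0*k1^2*k2 + a*n 0*n 1^2*k0^3*k2 + a*n 0^2*n 1*k0*k1*k2^2 + a*n 0^2*n 1*k0*k1^3 + (-1)*a*n 0^2*n 1*k0^3*k1 + (-1)*a*n 0^3*k0*k2^3 + (-1)*a*n 0^3*k0*k1^2*k2 + a*n 0^3*k0^3*k2 + s*a*n 2^2*k2^4 + 2*s*a*n 2^2*k1^2*k2^2 + s*a*n 2^2*k1^4 + (-2)*s*a*n 2^2*k0^2*k2^2 + (-2)*s*a*n 2^2*k0^2*k1^2 + s*a*n 2^2*k0^4 + (-1)*s*a*n 2^4*k2^4 + (-2)*s*a*n 2^4*k1^2*k2^2 + (-1)*s*a*n 2^4*k1^4 + 2*s*a*n 2^4*k0^2*k2^2 + 2*s*a*n 2^4*k0^2*k1^2 + (-1)*s*a*n 2^4*k0^4 + s*a*n 1*n 2*k0*k2^3 + s*a*n 1*n 2*k0*k1^2*k2 + (-1)*s*a*n 1*n 2*k0^3*k2 + (-1)*s*a*n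 1*n 2^3*k0*k2^3 + (-1)*s*a*n 1*n 2^3*k0*k1^2*k2 + s*a*n 1*n 2^3*k0^3*k2 + (-1)*s*a*n 1^2*k2^4 + (-1)*s*a*n 1^2*k1^2*k2^2 + s*a*n 1^2*k0^2*k2^2 + (-1)*s*a*n 1^2*n 2^2*k1^2*k2^2 + (-1)*s*a*n 1^2*n 2^2*k1^4 + s*a*n 1^2*n 2^2*k0^2*k2^2 + 2*s*a*n 1^2*n 2^2*k0^2*k1^2 + (-1)*s*a*n 1^2*n 2^2*k0^4 + (-1)*s*a*n 1^3*n 2*k0*k2^3 + (-1)*s*a*n 1^3*n 2*k0*k1^2*k2 + s*a*n 1^3*n 2*k0^3*k2 + s*a*n 1^4*k2^4 + s*a*n 1^4*k1^2*k2^2 + (-1)*s*a*n 1^4*k0^2*k2^2 + s*a*n 0*n 2*k0*k1*k2^2 + s*a*n 0*n 2*k0*k1^3 + (-1)*s*a*n 0*n 2*k0^3*k1 + (-1)*s*a*n 0*n 2^3*k0*k1*k2^2 + (-1)*s*a*n 0*n 2^3*k0*k1^3 + s*a*n 0*n 2^3*k0^3*k1 + (-2)*s*a*n 0*n 1*k1*k2^3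 + (-2)*s*a*n 0*n 1*k1^3*k2 + 2*s*a*n 0*n 1*k0^2*k1*k2 + 2*s*a*n 0*n 1*n 2^2*k1*k2^3 + 2*s*a*n 0*n 1*n 2^2*k1^3*k2 + (-2)*s*a*n 0*n 1*n 2^2*k0^2*k1*k2 + (-1)*s*a*n 0*n 1^2*n 2*k0*k1*k2^2 + (-1)*s*a*n 0*n 1^2*n 2*k0*k1^3 + s*a*n 0*n 1^2*n 2*k0^3*k1 + 2*s*a*n 0*n 1^3*k1*k2^3 + 2*s*a*n 0*n 1^3*k1^3*k2 + (-2)*s*a*n 0*n 1^3*k0^2*k1*k2 + (-1)*s*a*n 0^2*k1^2*k2^2 + (-1)*s*a*n 0^2*k1^4 + s*a*n 0^2*k0^2*k1^2 + (-1)*s*a*n 0^2*n 2^2*k2^4 + (-1)*s*a*n 0^2*n 2^2*k1^2*k2^2 + 2*s*a*n 0^2*n 2^2*k0^2*k2^2 + s*a*n 0^2*n 2^2*k0^2*k1^2 + (-1)*s*a*n 0^2*n 2^2*k0^4 + (-1)*s*a*n 0^2*n 1*n 2*k0*k2^3 + (-1)*s*a*n 0^2*n 1*n 2*k0*k1^2*k2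 + s*a*n 0^2*n 1*n 2*k0^3*k2 + s*a*n 0^2*n 1^2*k2^4 + 2*s*a*n 0^2*n 1^2*k1^2*k2^2 + s*a*n 0^2*n 1^2*k1^4 + (-1)*s*a*n 0^2*n 1^2*k0^2*k2^2 + (-1)*s*a*n 0^2*n 1^2*k0^2*k1^2 + (-1)*s*a*n 0^3*n 2*k0*k1*k2^2 + (-1)*s*a*n 0^3*n 2*k0*k1^3 + s*a*n 0^3*n 2*k0^3*k1 + 2*s*a*n 0^3*n 1*k1*k2^3 + 2*s*a*n 0^3*n 1*k1^3*k2 + (-2)*s*a*n 0^3*n 1*k0^2*k1*k2 + s*a*n 0^4*k1^2*k2^2 + s*a*n 0^4*k1^4 + (-1)*s*a*n 0^4*k0^2*k1^2 + c*a*n 1*k0*k1*k2^2 + c*a*n 1*k0*k1^3 + (-1)*c*a*n 1*k0^3*k1 + (-1)*c*a*n 1*n 2^2*k0*k1*k2^2 + (-1)*c*a*n 1*n 2^2*k0*k1^3 + c*a*n 1*n 2^2*k0^3*k1 + (-1)*c*a*n 1^3*k0*k1*k2^2 + (-1)*c*a*n 1^3*k0*k1^3 + c*a*n 1^3*k0^3*k1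 + (-1)*c*a*n 0*k0*k2^3 + (-1)*c*a*n 0*k0*k1^2*k2 + c*a*n 0*k0^3*k2 + c*a*n 0*n 2^2*k0*k2^3 + c*a*n 0*n 2^2*k0*k1^2*k2 + (-1)*c*a*n 0*n 2^2*k0^3*k2 + c*a*n 0*n 1^2*k0*k2^3 + c*a*n 0*n 1^2*k0*k1^2*k2 + (-1)*c*a*n 0*n 1^2*k0^3*k2 + (-1)*c*a*n 0^2*n 1*k0*k1*k2^2 + (-1)*c*a*n 0^2*n 1*k0*k1^3 + c*a*n 0^2*n 1*k0^3*k1 + c*a*n 0^3*k0*k2^3 + c*a*n 0^3*k0*k1^2*k2 + (-1)*c*a*n 0^3*k0^3*k2 + (-1)*κ*s*a*n 2^2*k0*k2^2 + (-1)*κ*s*a*n 2^2*k0*k1^2 + κ*s*a*n 2^2*k0^3 + κ*s*a*n 2^4*k0*k2^2 + κ*s*a*n 2^4*k0*k1^2 + (-1)*κ*s*a*n 2^4*k0^3 + 2*κ*s*a*n 1*n 2*k2^3 + 2*κ*s*a*n 1*n 2*k1^2*k2 + (-2)*κ*s*a*n 1*n 2*k0^2*k2 + (-2)*κ*s*a*n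 1*n 2^3*k2^3 + (-2)*κ*s*a*n 1*n 2^3*k1^2*k2 + 2*κ*s*a*n 1*n 2^3*k0^2*k2 + κ*s*a*n 1^2*n 2^2*k0*k2^2 + κ*s*a*n 1^2*n 2^2*k0*k1^2 + (-1)*κ*s*a*n 1^2*n 2^2*k0^3 + (-2)*κ*s*a*n 1^3*n 2*k2^3 + (-2)*κ*s*a*n 1^3*n 2*k1^2*k2 + 2*κ*s*a*n 1^3*n 2*k0^2*k2 + 2*κ*s*a*n 0*n 2*k1*k2^2 + 2*κ*s*a*n 0*n 2*k1^3 + (-2)*κ*s*a*n 0*n 2*k0^2*k1 + (-2)*κ*s*a*n 0*n 2^3*k1*k2^2 + (-2)*κ*s*a*n 0*n 2^3*k1^3 + 2*κ*s*a*n 0*n 2^3*k0^2*k1 + (-2)*κ*s*a*n 0*n 1^2*n 2*k1*k2^2 + (-2)*κ*s*a*n 0*n 1^2*n 2*k1^3 + 2*κ*s*a*n 0*n 1^2*n 2*k0^2*k1 + κ*s*a*n 0^2*n 2^2*k0*k2^2 + κ*s*a*n 0^2*n 2^2*k0*k1^2 + (-1)*κ*s*a*n 0^2*n 2^2*k0^3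 + (-2)*κ*s*a*n 0^2*n 1*n 2*k2^3 + (-2)*κ*s*a*n 0^2*n 1*n 2*k1^2*k2 + 2*κ*s*a*n 0^2*n 1*n 2*k0^2*k2 + (-2)*κ*s*a*n 0^3*n 2*k1*k2^2 + (-2)*κ*s*a*n 0^3*n 2*k1^3 + 2*κ*s*a*n 0^3*n 2*k0^2*k1) * hsc + (a*n 1*k0*k1*k2^2 + a*n 1*k0*k1^3 + (-1)*a*n 1*k0^3*k1 + (-1)*a*n 0*k0*k2^3 + (-1)*a*n 0*k0*k1^2*k2 + a*n 0*k0^3*k2 + (-1)*s*a*n 2^2*k2^4 + (-2)*s*a*n 2^2*k1^2*k2^2 + (-1)*s*a*n 2^2*k1^4 + 2*s*a*n 2^2*k0^2*k2^2 + 2*s*a*n 2^2*k0^2*k1^2 + (-1)*s*a*n 2^2*k0^4 + (-1)*s*a*n 1*n 2*k0*k2^3 + (-1)*s*a*n 1*n 2*k0*k1^2*k2 + s*a*n 1*n 2*k0^3*k2 + s*a*n 1^2*k2^4 + s*a*n 1^2*k1^2*k2^2 + (-1)*s*a*n 1^2*k0^2*k2^2 + (-1)*s*a*n 0*n 2*k0*k1*k2^2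 + (-1)*s*a*n 0*n 2*k0*k1^3 + s*a*n 0*n 2*k0^3*k1 + 2*s*a*n 0*n 1*k1*k2^3 + 2*s*a*n 0*n 1*k1^3*k2 + (-2)*s*a*n 0*n 1*k0^2*k1*k2 + s*a*n 0^2*k1^2*k2^2 + s*a*n 0^2*k1^4 + (-1)*s*a*n 0^2*k0^2*k1^2 + (-1)*c*a*n 1*k0*k1*k2^2 + (-1)*c*a*n 1*k0*k1^3 + c*a*n 1*k0^3*k1 + c*a*n 0*k0*k2^3 + c*a*n 0*k0*k1^2*k2 + (-1)*c*a*n 0*k0^3*k2 + c*s*a*n 2^2*k2^4 + 2*c*s*a*n 2^2*k1^2*k2^2 + c*s*a*n 2^2*k1^4 + (-1)*c*s*a*n 2^2*k0^2*k2^2 + (-1)*c*s*a*n 2^2*k0^2*k1^2 + c*s*a*n 1*n 2*k0*k2^3 + c*s*a*n 1*n 2*k0*k1^2*k2 + (-1)*c*s*a*n 1*n 2*k0^3*k2 + (-1)*c*s*a*n 1^2*k2^4 + (-1)*c*s*a*n 1^2*k1^2*k2^2 + 2*c*s*a*n 1^2*k0^2*k2^2 + c*s*a*n 1^2*k0^2*k1^2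 + (-1)*c*s*a*n 1^2*k0^4 + c*s*a*n 0*n 2*k0*k1*k2^2 + c*s*a*n 0*n 2*k0*k1^3 + (-1)*c*s*a*n 0*n 2*k0^3*k1 + (-2)*c*s*a*n 0*n 1*k1*k2^3 + (-2)*c*s*a*n 0*n 1*k1^3*k2 + 2*c*s*a*n 0*n 1*k0^2*k1*k2 + (-1)*c*s*a*n 0^2*k1^2*k2^2 + (-1)*c*s*a*n 0^2*k1^4 + c*s*a*n 0^2*k0^2*k2^2 + 2*c*s*a*n 0^2*k0^2*k1^2 + (-1)*c*s*a*n 0^2*k0^4 + c^2*s*a*k0^2*k2^2 + c^2*s*a*k0^2*k1^2 + (-1)*c^2*s*a*k0^4 + (-1)*c^2*s*a*n 2^2*k0^2*k2^2 + (-1)*c^2*s*a*n 2^2*k0^2*k1^2 + c^2*s*a*n 2^2*k0^4 + (-1)*c^2*s*a*n 1^2*k0^2*k2^2 + (-1)*c^2*s*a*n 1^2*k0^2*k1^2 + c^2*s*a*n 1^2*k0^4 + (-1)*c^2*s*a*n 0^2*k0^2*k2^2 + (-1)*c^2*s*a*n 0^2*k0^2*k1^2 + c^2*s*a*n 0^2*k0^4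 + κ*s*a*n 2^2*k0*k2^2 + κ*s*a*n 2^2*k0*k1^2 + (-1)*κ*s*a*n 2^2*k0^3 + (-2)*κ*s*a*n 1*n 2*k2^3 + (-2)*κ*s*a*n 1*n 2*k1^2*k2 + 2*κ*s*a*n 1*n 2*k0^2*k2 + (-2)*κ*s*a*n 0*n 2*k1*k2^2 + (-2)*κ*s*a*n 0*n 2*k1^3 + 2*κ*s*a*n 0*n 2*k0^2*k1 + 2*κ*c*s*a*n 1*n 2*k2^3 + 2*κ*c*s*a*n 1*n 2*k1^2*k2 + (-2)*κ*c*s*a*n 1*n 2*k0^2*k2 + κ*c*s*a*n 1^2*k0*k2^2 + κ*c*s*a*n 1^2*k0*k1^2 + (-1)*κ*c*s*a*n 1^2*k0^3 + 2*κ*c*s*a*n 0*n 2*k1*k2^2 + 2*κ*c*s*a*n 0*n 2*k1^3 + (-2)*κ*c*s*a*n 0*n 2*k0^2*k1 + κ*c*s*a*n 0^2*k0*k2^2 + κ*c*s*a*n 0^2*k0*k1^2 + (-1)*κ*c*s*a*n 0^2*k0^3 + κ*c^2*s*a*k0*k2^2 + κ*c^2*s*a*k0*k1^2 + (-1)*κ*c^2*s*a*k0^3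 + (-1)*κ*c^2*s*a*n 2^2*k0*k2^2 + (-1)*κ*c^2*s*a*n 2^2*k0*k1^2 + κ*c^2*s*a*n 2^2*k0^3 + (-1)*κ*c^2*s*a*n 1^2*k0*k2^2 + (-1)*κ*c^2*s*a*n 1^2*k0*k1^2 + κ*c^2*s*a*n 1^2*k0^3 + (-1)*κ*c^2*s*a*n 0^2*k0*k2^2 + (-1)*κ*c^2*s*a*n 0^2*k0*k1^2 + κ*c^2*s*a*n 0^2*k0^3) * hn
  rw [hF.fderiv]
  have hcoe : (D : (Fin 3 → ℝ) →ₗ[ℝ] (Fin 3 → ℝ)) = Matrix.toLin' M := by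
    rw [hD]; exact LinearMap.coe_toContinuousLinearMap _
  rw [hcoe, LinearMap.det_toLin', hdet]
  rw [abs_div, abs_of_pos hκpos]
  rcases hε with rfl | rfl <;>
    · rw [abs_mul, abs_mul, abs_mul, abs_of_pos hk0]
      simp
      ring
end
end

section
/- Let k0>0, L>0, let n∈S² be a constant unit vector with n1²+n2²≠0 (i.e. n is not parallel to e3), and let α∈C¹([0,L],ℝ) be strictly increasing with α(0)=0 and α(L)=2π. Then for almost every (k1,k2,t)∈U (with respect to Lebesgue measure on ℝ³), the cardinality of the preimage T±⁻¹(T±(k1,k2,t)) taken within U equals 2. -/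
open MeasureTheory Set

noncomputable section

open Real

set_option maxHeartbeats 1000000

noncomputable def bstar (A B : ℝ) : ℝ := if A = 0 then Real.pi else 2 * Real.arctan (B / A)

lemma ext3 {f g : Fin 3 → ℝ} (h0 : f 0 = g 0) (h1 : f 1 = g 1) (h2 : f 2 = g 2) : f = g := by
  funext i; fin_cases i <;> assumption

lemma rot3_0 (n : Fin 3 → ℝ) (θ : ℝ) (y : Fin 3 → ℝ) :
    rot3 n θ y 0 = (1 - Real.cos θ) * (n 0 * y 0 + n 1 * y 1 + n 2 * y 2) * n 0
      + Real.cos θ * y 0 - Real.sin θ * (n 1 * y 2 - n 2 * y 1) := rfl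

lemma rot3_1 (n : Fin 3 → ℝ) (θ : ℝ) (y : Fin 3 → ℝ) :
    rot3 n θ y 1 = (1 - Real.cos θ) * (n 0 * y 0 + n 1 * y 1 + n 2 * y 2) * n 1
      + Real.cos θ * y 1 - Real.sin θ * (n 2 * y 0 - n 0 * y 2) := rfl

lemma rot3_2 (n : Fin 3 → ℝ) (θ : ℝ) (y : Fin 3 → ℝ) :
    rot3 n θ y 2 = (1 - Real.cos θ) * (n 0 * y 0 + n 1 * y 1 + n 2 * y 2) * n 2
      + Real.cos θ * y 2 - Real.sin θ * (n 0 * y 1 - n 1 * y 0) := rfl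

lemma rot3_zero (n y : Fin 3 → ℝ) : rot3 n 0 y = y := by
  apply ext3 <;> simp [rot3_0, rot3_1, rot3_2]

lemma rot3_comp (n : Fin 3 → ℝ) (hunit : dot3 n n = 1) (a b : ℝ) (y : Fin 3 → ℝ) :
    rot3 n a (rot3 n b y) = rot3 n (a + b) y := by
  have hN : n 0 * n 0 + n 1 * n 1 + n 2 * n 2 = 1 := hunit
  apply ext3 <;> simp only [rot3_0, rot3_1, rot3_2]
  · linear_combination ((n 0 * y 0 + n 1 * y 1 + n 2 * y 2) * (1 - Real.cos a) * (1 - Real.cos b) * n 0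
        - Real.sin a * Real.sin b * y 0) * hN
      + ((n 0 * y 0 + n 1 * y 1 + n 2 * y 2) * n 0 - y 0) * (Real.cos_add a b)
      + (n 1 * y 2 - n 2 * y 1) * (Real.sin_add a b)
  · linear_combination ((n 0 * y 0 + n 1 * y 1 + n 2 * y 2) * (1 - Real.cos a) * (1 - Real.cos b) * n 1
        - Real.sin a * Real.sin b * y 1) * hN
      + ((n 0 * y 0 + n 1 * y 1 + n 2 * y 2) * n 1 - y 1) * (Real.cos_add a b)
      + (n 2 * y 0 - n 0 * y 2) * (Real.sin_add a b)
  · linear_combination ((n 0 * y 0 + n 1 * y 1 + n 2 * y 2) * (1 - Real.cos a) * (1 - Real.cos b) * n 2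
        - Real.sin a * Real.sin b * y 2) * hN
      + ((n 0 * y 0 + n 1 * y 1 + n 2 * y 2) * n 2 - y 2) * (Real.cos_add a b)
      + (n 0 * y 1 - n 1 * y 0) * (Real.sin_add a b)

lemma rot3_normsq (n : Fin 3 → ℝ) (hunit : dot3 n n = 1) (θ : ℝ) (y : Fin 3 → ℝ) :
    dot3 (rot3 n θ y) (rot3 n θ y) = dot3 y y := by
  have hN : n 0 * n 0 + n 1 * n 1 + n 2 * n 2 = 1 := hunit
  have hS : Real.sin θ ^ 2 + Real.cos θ ^ 2 = 1 := Real.sin_sq_add_cos_sq θ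
  show rot3 n θ y 0 * rot3 n θ y 0 + rot3 n θ y 1 * rot3 n θ y 1 + rot3 n θ y 2 * rot3 n θ y 2
    = y 0 * y 0 + y 1 * y 1 + y 2 * y 2
  simp only [rot3_0, rot3_1, rot3_2]
  linear_combination ((1 - Real.cos θ)^2 * (n 0 * y 0 + n 1 * y 1 + n 2 * y 2)^2
      + (1 - Real.cos θ^2) * (y 0 * y 0 + y 1 * y 1 + y 2 * y 2)) * hN
    + ((n 0 * n 0 + n 1 * n 1 + n 2 * n 2) * (y 0 * y 0 + y 1 * y 1 + y 2 * y 2)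
      - (n 0 * y 0 + n 1 * y 1 + n 2 * y 2)^2) * hS


lemma bstar_mem (A B : ℝ) : bstar A B ∈ Ioc (-π) π := by
  unfold bstar
  split_ifs
  · exact ⟨by linarith [Real.pi_pos], le_refl _⟩
  · constructor
    · nlinarith [Real.neg_pi_div_two_lt_arctan (B / A)]
    · nlinarith [Real.arctan_lt_pi_div_two (B / A)]

lemma bstar_ne_zero {A B : ℝ} (hB : B ≠ 0) : bstar A B ≠ 0 := by
  unfold bstar
  split_ifs with hA
  · exact Real.pi_ne_zero
  · intro h
    have : Real.arctan (B / A) = 0 := by linarith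
    have : B / A = 0 := by
      have := Real.arctan_eq_zero_iff.mp this
      exact this
    exact hB (by field_simp at this; simpa using this)

lemma bstar_eqn (A B : ℝ) : (1 - Real.cos (bstar A B)) * A = Real.sin (bstar A B) * B := by
  unfold bstar
  split_ifs with hA
  · simp [hA]
  · set φ := Real.arctan (B / A) with hφ
    have hc : Real.cos φ ≠ 0 := ne_of_gt (Real.cos_arctan_pos _)
    have htan : Real.sin φ / Real.cos φ = B / A := by
      rw [← Real.tan_eq_sin_div_cos, hφ, Real.tan_arctan]
    have hkey : A * Real.sin φ = B * Real.cos φ := by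
      field_simp at htan
      linarith
    have h1 : Real.cos (2 * φ) = 2 * Real.cos φ ^ 2 - 1 := Real.cos_two_mul φ
    have h2 : Real.sin (2 * φ) = 2 * Real.sin φ * Real.cos φ := Real.sin_two_mul φ
    have h3 : Real.sin φ ^ 2 + Real.cos φ ^ 2 = 1 := Real.sin_sq_add_cos_sq φ
    rw [h1, h2]
    linear_combination 2 * Real.sin φ * hkey - 2 * A * h3

lemma angle_eq {A B : ℝ} (hB : B ≠ 0) {β : ℝ}
    (h : (1 - Real.cos β) * A = Real.sin β * B) :
    (∃ m : ℤ, β = 2 * π * m) ∨ (∃ m : ℤ, β = bstar A B + 2 * π * m) := by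
  have h1 : Real.cos β = 2 * Real.cos (β/2) ^ 2 - 1 := by
    have := Real.cos_two_mul (β/2); rw [show 2*(β/2) = β by ring] at this; exact this
  have h2 : Real.sin β = 2 * Real.sin (β/2) * Real.cos (β/2) := by
    have := Real.sin_two_mul (β/2); rw [show 2*(β/2) = β by ring] at this; exact this
  have h3 : Real.sin (β/2) ^ 2 + Real.cos (β/2) ^ 2 = 1 := Real.sin_sq_add_cos_sq _
  rw [h1, h2] at h
  have key : Real.sin (β/2) * (A * Real.sin (β/2) - B * Real.cos (β/2)) = 0 := by
    linear_combination A * h3 + (1/2) * h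
  rcases mul_eq_zero.mp key with hs | hs
  · left
    obtain ⟨m, hm⟩ := Real.sin_eq_zero_iff.mp hs
    exact ⟨m, by linarith⟩
  · right
    by_cases hA : A = 0
    · rw [hA] at hs
      have hc : Real.cos (β/2) = 0 := by
        simpa [hB] using hs
      obtain ⟨m, hm⟩ := Real.cos_eq_zero_iff.mp hc
      refine ⟨m, ?_⟩
      unfold bstar
      rw [if_pos hA]
      have : β = (2*m+1)*π := by linarith
      rw [this]; push_cast; ring
    · set φ := Real.arctan (B / A) with hφ
      have hcφ : Real.cos φ ≠ 0 := ne_of_gt (Real.cos_arctan_pos _)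
      have htan : Real.sin φ / Real.cos φ = B / A := by
        rw [← Real.tan_eq_sin_div_cos, hφ, Real.tan_arctan]
      have hkey : A * Real.sin φ = B * Real.cos φ := by
        field_simp at htan; linarith
      have hz : Real.sin (β/2 - φ) = 0 := by
        rw [Real.sin_sub]
        have : A * (Real.sin (β/2) * Real.cos φ - Real.cos (β/2) * Real.sin φ) = 0 := by
          have hs' : A * Real.sin (β/2) = B * Real.cos (β/2) := by linarith
          calc A * (Real.sin (β/2) * Real.cos φ - Real.cos (β/2) * Real.sin φ)
              = (A * Real.sin (β/2)) * Real.cos φ - Real.cos (β/2) * (A * Real.sin φ) := by ring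
            _ = (B * Real.cos (β/2)) * Real.cos φ - Real.cos (β/2) * (B * Real.cos φ) := by
                rw [hs', hkey]
            _ = 0 := by ring
        exact (mul_eq_zero.mp this).resolve_left hA
      obtain ⟨m, hm⟩ := Real.sin_eq_zero_iff.mp hz
      refine ⟨m, ?_⟩
      unfold bstar
      rw [if_neg hA]
      rw [← hφ]
      linarith

def Aval (k0 ε : ℝ) (n : Fin 3 → ℝ) (k1 k2 : ℝ) : ℝ :=
  (n 0 * k1 + n 1 * k2 + n 2 * (ε * kappa k0 k1 k2 - k0)) * n 2 - (ε * kappa k0 k1 k2 - k0)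
def Bval (n : Fin 3 → ℝ) (k1 k2 : ℝ) : ℝ := n 0 * k2 - n 1 * k1

lemma x2_eq (n h : Fin 3 → ℝ) (b : ℝ)
    (heq : (1 - Real.cos b) * ((n 0 * h 0 + n 1 * h 1 + n 2 * h 2) * n 2 - h 2)
      = Real.sin b * (n 0 * h 1 - n 1 * h 0)) :
    rot3 n b h 2 = h 2 := by rw [rot3_2]; linear_combination heq

lemma x2_eqn (n h : Fin 3 → ℝ) (b : ℝ) (h2eq : rot3 n b h 2 = h 2) :
    (1 - Real.cos b) * ((n 0 * h 0 + n 1 * h 1 + n 2 * h 2) * n 2 - h 2)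
      = Real.sin b * (n 0 * h 1 - n 1 * h 0) := by
  rw [rot3_2] at h2eq; linear_combination h2eq

lemma rot3_per_int (n : Fin 3 → ℝ) (θ : ℝ) (m : ℤ) (y : Fin 3 → ℝ) :
    rot3 n (θ + 2 * π * m) y = rot3 n θ y := by
  have hc : Real.cos (θ + 2 * π * m) = Real.cos θ := by
    rw [show θ + 2 * π * (m : ℝ) = θ + (m : ℝ) * (2 * π) by ring, Real.cos_add_int_mul_two_pi]
  have hs : Real.sin (θ + 2 * π * m) = Real.sin θ := by
    rw [show θ + 2 * π * (m : ℝ) = θ + (m : ℝ) * (2 * π) by ring, Real.sin_add_int_mul_two_pi]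
  funext i; unfold rot3; rw [hc, hs]

lemma int_zero_of (m : ℤ) (x : ℝ) (hx1 : -(2*π) < x) (hx2 : x < 2*π) (h : x = 2*π*m) :
    m = 0 := by
  have hπ := Real.pi_pos
  have h1 : (-1:ℝ) < (m:ℝ) := by nlinarith
  have h2 : ((m:ℝ)) < 1 := by nlinarith
  have h1' : (-1:ℤ) < m := by exact_mod_cast h1
  have h2' : m < (1:ℤ) := by exact_mod_cast h2
  omega

lemma pointwise (k0 L ε : ℝ) (hk0 : 0 < k0) (hL : 0 < L) (hε : ε = 1 ∨ ε = -1)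
    (n : Fin 3 → ℝ) (hunit : dot3 n n = 1)
    (α : ℝ → ℝ) (hα : ContDiffOn ℝ 1 α (Icc 0 L))
    (hmono : StrictMonoOn α (Icc 0 L)) (hα0 : α 0 = 0) (hαL : α L = 2 * Real.pi)
    (p : Fin 3 → ℝ) (hpU : p ∈ Uset k0 L) (hp0 : 0 < p 2) (hpL : p 2 < L)
    (hB : Bval n (p 0) (p 1) ≠ 0)
    (hne : (1 - Real.cos (α (p 2))) * Aval k0 ε n (p 0) (p 1)
      ≠ Real.sin (α (p 2)) * Bval n (p 0) (p 1)) :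
    Set.ncard {q ∈ Uset k0 L |
        Tmap k0 ε (fun _ => n) α q = Tmap k0 ε (fun _ => n) α p} = 2 := by
  have hπ := Real.pi_pos
  set Av := Aval k0 ε n (p 0) (p 1) with hAv
  set Bv := Bval n (p 0) (p 1) with hBv
  set b := bstar Av Bv with hb
  obtain ⟨hb1, hb2⟩ := bstar_mem Av Bv
  have hbne : b ≠ 0 := bstar_ne_zero hB
  have mem0 : (0:ℝ) ∈ Icc (0:ℝ) L := left_mem_Icc.mpr hL.le
  have memL : L ∈ Icc (0:ℝ) L := right_mem_Icc.mpr hL.le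
  have memp : p 2 ∈ Icc (0:ℝ) L := hpU.2
  have ha1 : 0 < α (p 2) := by rw [← hα0]; exact hmono mem0 memp hp0
  have ha2 : α (p 2) < 2 * π := by rw [← hαL]; exact hmono memp memL hpL
  -- no coincidence
  have hnc : ∀ m : ℤ, α (p 2) ≠ b + 2 * π * m := by
    intro m heq
    apply hne
    rw [heq, show b + 2 * π * (m:ℝ) = b + (m:ℝ) * (2 * π) by ring,
      Real.cos_add_int_mul_two_pi, Real.sin_add_int_mul_two_pi]
    exact bstar_eqn Av Bv
  -- representative r
  have hrex : ∃ (r : ℝ) (m' : ℤ), 0 < r ∧ r < 2 * π ∧ α (p 2) = r + b + 2 * π * m' := by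
    by_cases h1 : α (p 2) - b ≤ 0
    · refine ⟨α (p 2) - b + 2 * π, -1, ?_, ?_, by push_cast; ring⟩
      · linarith
      · have : α (p 2) - b ≠ 0 := fun h => hnc 0 (by push_cast; linarith)
        have : α (p 2) - b < 0 := lt_of_le_of_ne h1 this
        linarith
    · push_neg at h1
      by_cases h2 : α (p 2) - b < 2 * π
      · exact ⟨α (p 2) - b, 0, by linarith, by linarith, by push_cast; ring⟩
      · push_neg at h2
        refine ⟨α (p 2) - b - 2 * π, 1, ?_, by linarith, by push_cast; ring⟩
        have : α (p 2) - b ≠ 2 * π := fun h => hnc 1 (by push_cast; linarith)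
        have : 2 * π < α (p 2) - b := lt_of_le_of_ne h2 (Ne.symm this)
        linarith
  obtain ⟨r, m', hr1, hr2, hr3⟩ := hrex
  have hrIcc : r ∈ Icc (α 0) (α L) := by rw [hα0, hαL]; exact ⟨hr1.le, hr2.le⟩
  obtain ⟨tst, htmem, hteq⟩ := intermediate_value_Icc hL.le hα.continuousOn hrIcc
  set x := rot3 n b (hpm k0 ε (p 0) (p 1)) with hx
  set qstar : Fin 3 → ℝ := ![x 0, x 1, tst] with hqstar
  have hq0 : qstar 0 = x 0 := rfl
  have hq1 : qstar 1 = x 1 := rfl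
  have hq2 : qstar 2 = tst := rfl
  have hκp2 : kappa k0 (p 0) (p 1) ^ 2 = k0 ^ 2 - p 0 ^ 2 - p 1 ^ 2 :=
    Real.sq_sqrt (by have := hpU.1; linarith)
  have hε2 : ε ^ 2 = 1 := by rcases hε with h | h <;> rw [h] <;> norm_num
  have hεne : ε ≠ 0 := by rcases hε with h | h <;> rw [h] <;> norm_num
  -- facts about x
  have hbeqn : (1 - Real.cos b) * Av = Real.sin b * Bv := bstar_eqn Av Bv
  have hx2 : x 2 = ε * kappa k0 (p 0) (p 1) - k0 := x2_eq n (hpm k0 ε (p 0) (p 1)) b hbeqn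
  have hxnorm : x 0 * x 0 + x 1 * x 1 + x 2 * x 2
      = p 0 * p 0 + p 1 * p 1 + (ε * kappa k0 (p 0) (p 1) - k0) * (ε * kappa k0 (p 0) (p 1) - k0) :=
    rot3_normsq n hunit b (hpm k0 ε (p 0) (p 1))
  have hxsum : x 0 ^ 2 + x 1 ^ 2 = p 0 ^ 2 + p 1 ^ 2 := by
    rw [hx2] at hxnorm; linear_combination hxnorm
  have hκx : kappa k0 (x 0) (x 1) = kappa k0 (p 0) (p 1) := by
    unfold kappa; congr 1; linarith
  have hhx : hpm k0 ε (x 0) (x 1) = x := by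
    apply ext3
    · rfl
    · rfl
    · show ε * kappa k0 (x 0) (x 1) - k0 = x 2
      rw [hκx, hx2]
  have hqstarU : qstar ∈ Uset k0 L := by
    constructor
    · show x 0 ^ 2 + x 1 ^ 2 < k0 ^ 2
      rw [hxsum]; exact hpU.1
    · exact htmem
  have hTqstar : Tmap k0 ε (fun _ => n) α qstar = Tmap k0 ε (fun _ => n) α p := by
    show rot3 n (α tst) (hpm k0 ε (x 0) (x 1)) = rot3 n (α (p 2)) (hpm k0 ε (p 0) (p 1))
    rw [hhx, hteq, hx, rot3_comp n hunit,
      show r + b = α (p 2) + 2 * π * ((-m' : ℤ) : ℝ) by push_cast; linarith,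
      rot3_per_int]
  have hpqstar : p ≠ qstar := by
    intro hpq
    have h7 : p 2 = tst := congrFun hpq 2
    have h8 : α (p 2) = r := by rw [h7, hteq]
    have h9 : b = 2 * π * ((-m' : ℤ) : ℝ) := by push_cast; linarith
    have hm0 : (-m' : ℤ) = 0 := int_zero_of _ _ (by linarith) (by linarith) h9
    apply hbne
    rw [h9, hm0]
    norm_num
  -- set equality
  have hset : {q ∈ Uset k0 L |
      Tmap k0 ε (fun _ => n) α q = Tmap k0 ε (fun _ => n) α p} = {p, qstar} := by
    ext q
    simp only [Set.mem_setOf_eq, Set.mem_insert_iff, Set.mem_singleton_iff]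
    constructor
    · rintro ⟨hqU, hTq⟩
      have memq : q 2 ∈ Icc (0:ℝ) L := hqU.2
      have hκq2 : kappa k0 (q 0) (q 1) ^ 2 = k0 ^ 2 - q 0 ^ 2 - q 1 ^ 2 :=
        Real.sq_sqrt (by have := hqU.1; linarith)
      have hkey : hpm k0 ε (q 0) (q 1)
          = rot3 n (α (p 2) - α (q 2)) (hpm k0 ε (p 0) (p 1)) := by
        have h1 : rot3 n (α (q 2)) (hpm k0 ε (q 0) (q 1))
            = rot3 n (α (p 2)) (hpm k0 ε (p 0) (p 1)) := hTq
        have h2 := congrArg (rot3 n (-(α (q 2)))) h1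
        rw [rot3_comp n hunit, rot3_comp n hunit,
          show -(α (q 2)) + α (q 2) = 0 by ring, rot3_zero,
          show -(α (q 2)) + α (p 2) = α (p 2) - α (q 2) by ring] at h2
        exact h2
      have hnormq : q 0 * q 0 + q 1 * q 1
            + (ε * kappa k0 (q 0) (q 1) - k0) * (ε * kappa k0 (q 0) (q 1) - k0)
          = p 0 * p 0 + p 1 * p 1
            + (ε * kappa k0 (p 0) (p 1) - k0) * (ε * kappa k0 (p 0) (p 1) - k0) := by
        have h3 := congrArg (fun v => dot3 v v) hkey
        rw [rot3_normsq n hunit] at h3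
        exact h3
      have hκeq : kappa k0 (q 0) (q 1) = kappa k0 (p 0) (p 1) := by
        have h5 : (2 * k0 * ε) ≠ 0 := by
          exact mul_ne_zero (mul_ne_zero (by norm_num) hk0.ne') hεne
        apply mul_left_cancel₀ h5
        linear_combination (-1) * hnormq + ε ^ 2 * hκq2 - ε ^ 2 * hκp2
          - (q 0 ^ 2 + q 1 ^ 2 - p 0 ^ 2 - p 1 ^ 2) * hε2
      have heqn : (1 - Real.cos (α (p 2) - α (q 2))) * Av
          = Real.sin (α (p 2) - α (q 2)) * Bv := by
        have h6 : rot3 n (α (p 2) - α (q 2)) (hpm k0 ε (p 0) (p 1)) 2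
            = hpm k0 ε (p 0) (p 1) 2 := by
          rw [← hkey]
          show ε * kappa k0 (q 0) (q 1) - k0 = ε * kappa k0 (p 0) (p 1) - k0
          rw [hκeq]
        exact x2_eqn n (hpm k0 ε (p 0) (p 1)) _ h6
      have hs_mem : α (q 2) ∈ Icc (0:ℝ) (2 * π) := by
        constructor
        · rw [← hα0]; exact hmono.monotoneOn mem0 memq memq.1
        · rw [← hαL]; exact hmono.monotoneOn memq memL memq.2
      rcases angle_eq hB heqn with ⟨m, hm⟩ | ⟨m, hm⟩
      · -- q = p
        left
        have hm0 : m = 0 := by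
          apply int_zero_of m (α (p 2) - α (q 2)) (by linarith [hs_mem.2]) (by linarith [hs_mem.1]) hm
        rw [hm0] at hm
        push_cast at hm
        have haq : α (q 2) = α (p 2) := by linarith
        have hq2p2 : q 2 = p 2 := hmono.injOn memq memp haq
        rw [show α (p 2) - α (q 2) = 0 by linarith, rot3_zero] at hkey
        apply ext3
        · exact congrFun hkey 0
        · exact congrFun hkey 1
        · exact hq2p2
      · -- q = qstar
        right
        have hs0 : α (q 2) ≠ 0 := fun h => hnc m (by linarith)
        have hs2π : α (q 2) ≠ 2 * π := fun h => hnc (m + 1) (by push_cast; linarith)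
        have hslt : α (q 2) < 2 * π := lt_of_le_of_ne hs_mem.2 hs2π
        have hsgt : 0 < α (q 2) := lt_of_le_of_ne hs_mem.1 (Ne.symm hs0)
        have h10 : α (q 2) - r = 2 * π * ((m' - m : ℤ) : ℝ) := by push_cast; linarith
        have hmm' : m' - m = 0 := int_zero_of _ _ (by linarith) (by linarith) h10
        have hsr : α (q 2) = r := by
          rw [hmm'] at h10; simp at h10; linarith
        have hq2t : q 2 = tst := hmono.injOn memq htmem (by rw [hsr, hteq])
        rw [hm, show b + 2 * π * (m : ℝ) = b + 2 * π * ((m : ℤ) : ℝ) by norm_num,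
          rot3_per_int] at hkey
        apply ext3
        · exact congrFun hkey 0
        · exact congrFun hkey 1
        · exact hq2t
    · rintro (rfl | rfl)
      · exact ⟨hpU, rfl⟩
      · exact ⟨hqstarU, hTqstar⟩
  rw [hset]
  exact Set.ncard_pair hpqstar

lemma hyper_null {m : ℕ} (f : (Fin m → ℝ) →ₗ[ℝ] ℝ) (v : Fin m → ℝ) (hv : f v ≠ 0) :
    volume {p : Fin m → ℝ | f p = 0} = 0 := by
  have h1 : {p : Fin m → ℝ | f p = 0} = (LinearMap.ker f : Submodule ℝ (Fin m → ℝ)) := by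
    ext p; simp [LinearMap.mem_ker]
  rw [h1]
  apply MeasureTheory.Measure.addHaar_submodule
  intro h
  exact hv (by simp [LinearMap.ker_eq_top.mp h])

example (t : ℝ) (k : Fin 2 → ℝ) :
    (MeasurableEquiv.piFinSuccAbove (fun _ : Fin 3 => ℝ) 2).symm (t, k) 0 = k 0 := rfl
example (t : ℝ) (k : Fin 2 → ℝ) :
    (MeasurableEquiv.piFinSuccAbove (fun _ : Fin 3 => ℝ) 2).symm (t, k) 1 = k 1 := rfl
example (t : ℝ) (k : Fin 2 → ℝ) :
    (MeasurableEquiv.piFinSuccAbove (fun _ : Fin 3 => ℝ) 2).symm (t, k) 2 = t := rfl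

lemma null_of_slices (Bd : Set (Fin 3 → ℝ)) (hBd : MeasurableSet Bd)
    (h : ∀ᵐ k : Fin 2 → ℝ, volume {t : ℝ |
        (MeasurableEquiv.piFinSuccAbove (fun _ : Fin 3 => ℝ) 2).symm (t, k) ∈ Bd} = 0) :
    volume Bd = 0 := by
  set e := MeasurableEquiv.piFinSuccAbove (fun _ : Fin 3 => ℝ) 2 with he
  set S : Set (ℝ × (Fin 2 → ℝ)) := e.symm ⁻¹' Bd with hS
  have hSmeas : MeasurableSet S := e.symm.measurable hBd
  have h1 : Bd = e ⁻¹' S := by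
    rw [hS, ← Set.preimage_comp]; simp
  rw [h1, (volume_preserving_piFinSuccAbove (fun _ : Fin 3 => ℝ) 2).measure_preimage
    hSmeas.nullMeasurableSet]
  have h2 : volume S = (volume.prod volume) (Prod.swap ⁻¹' S : Set ((Fin 2 → ℝ) × ℝ)) := by
    rw [Measure.volume_eq_prod ℝ (Fin 2 → ℝ),
      ← (Measure.measurePreserving_swap).measure_preimage hSmeas.nullMeasurableSet]
  rw [h2, Measure.measure_prod_null (measurable_swap hSmeas)]
  filter_upwards [h] with k hk
  exact hk


theorem stmt2 (k0 L ε : ℝ) (hk0 : 0 < k0) (hL : 0 < L) (hε : ε = 1 ∨ ε = -1)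
    (n : Fin 3 → ℝ) (hunit : dot3 n n = 1) (hn12 : n 0 ^ 2 + n 1 ^ 2 ≠ 0)
    (α : ℝ → ℝ) (hα : ContDiffOn ℝ 1 α (Icc 0 L))
    (hmono : StrictMonoOn α (Icc 0 L)) (hα0 : α 0 = 0) (hαL : α L = 2 * Real.pi) :
    ∀ᵐ p ∂(volume.restrict (Uset k0 L)),
      Set.ncard {q ∈ Uset k0 L |
          Tmap k0 ε (fun _ => n) α q = Tmap k0 ε (fun _ => n) α p} = 2 := by
  have hπ := Real.pi_pos
  set αc : ℝ → ℝ := fun t => α (max 0 (min t L)) with hαcdef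
  have hαc_cont : Continuous αc := by
    apply hα.continuousOn.comp_continuous
    · exact continuous_const.max (continuous_id.min continuous_const)
    · intro t; exact ⟨le_max_left _ _, max_le hL.le (min_le_right _ _)⟩
  have hαc_eq : ∀ t ∈ Icc (0:ℝ) L, αc t = α t := by
    intro t ht; simp only [hαcdef]; rw [min_eq_left ht.2, max_eq_right ht.1]
  have hκ_cont : Continuous (fun p : Fin 3 → ℝ => kappa k0 (p 0) (p 1)) := by
    show Continuous fun p : Fin 3 → ℝ => Real.sqrt (k0 ^ 2 - (p 0) ^ 2 - (p 1) ^ 2)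
    exact Real.continuous_sqrt.comp
      ((continuous_const.sub ((continuous_apply 0).pow 2)).sub ((continuous_apply 1).pow 2))
  have hεκ_cont : Continuous (fun p : Fin 3 → ℝ => ε * kappa k0 (p 0) (p 1) - k0) :=
    (continuous_const.mul hκ_cont).sub continuous_const
  have hA_cont : Continuous (fun p : Fin 3 → ℝ => Aval k0 ε n (p 0) (p 1)) := by
    unfold Aval
    exact ((((continuous_const.mul (continuous_apply 0)).add
      (continuous_const.mul (continuous_apply 1))).add
      (continuous_const.mul hεκ_cont)).mul continuous_const).sub hεκ_cont
  have hB_cont : Continuous (fun p : Fin 3 → ℝ => Bval n (p 0) (p 1)) := by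
    unfold Bval
    exact (continuous_const.mul (continuous_apply 1)).sub
      (continuous_const.mul (continuous_apply 0))
  have hc2 : Continuous (fun p : Fin 3 → ℝ => αc (p 2)) := hαc_cont.comp (continuous_apply 2)
  have hF_cont : Continuous (fun p : Fin 3 → ℝ =>
      (1 - Real.cos (αc (p 2))) * Aval k0 ε n (p 0) (p 1)
        - Real.sin (αc (p 2)) * Bval n (p 0) (p 1)) :=
    ((continuous_const.sub (Real.continuous_cos.comp hc2)).mul hA_cont).sub
      ((Real.continuous_sin.comp hc2).mul hB_cont)
  set Bd1 : Set (Fin 3 → ℝ) := {p | Bval n (p 0) (p 1) = 0} with hBd1def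
  set Bd2 : Set (Fin 3 → ℝ) := {p | Bval n (p 0) (p 1) ≠ 0 ∧ (p 2 = 0 ∨ p 2 = L ∨
    (p 2 ∈ Icc (0:ℝ) L ∧ (1 - Real.cos (αc (p 2))) * Aval k0 ε n (p 0) (p 1)
      - Real.sin (αc (p 2)) * Bval n (p 0) (p 1) = 0))} with hBd2def
  -- Bd1 is null
  have hBd1_null : volume Bd1 = 0 := by
    have h1 := hyper_null (n 0 • (LinearMap.proj 1 : (Fin 3 → ℝ) →ₗ[ℝ] ℝ)
        - n 1 • (LinearMap.proj 0 : (Fin 3 → ℝ) →ₗ[ℝ] ℝ)) ![-(n 1), n 0, 0]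
      (by
        simp only [LinearMap.sub_apply, LinearMap.smul_apply, LinearMap.proj_apply,
          smul_eq_mul, Matrix.cons_val_one, Matrix.head_cons, Matrix.cons_val_zero]
        intro h; apply hn12; linear_combination h)
    have h2 : Bd1 = {p : Fin 3 → ℝ | (n 0 • (LinearMap.proj 1 : (Fin 3 → ℝ) →ₗ[ℝ] ℝ)
        - n 1 • (LinearMap.proj 0 : (Fin 3 → ℝ) →ₗ[ℝ] ℝ)) p = 0} := by
      ext p
      simp [hBd1def, Bval, LinearMap.sub_apply, LinearMap.smul_apply, LinearMap.proj_apply,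
        smul_eq_mul]
    rw [h2]; exact h1
  -- Bd2 is null
  have hBk_null : volume {k : Fin 2 → ℝ | Bval n (k 0) (k 1) = 0} = 0 := by
    have h1 := hyper_null (n 0 • (LinearMap.proj 1 : (Fin 2 → ℝ) →ₗ[ℝ] ℝ)
        - n 1 • (LinearMap.proj 0 : (Fin 2 → ℝ) →ₗ[ℝ] ℝ)) ![-(n 1), n 0]
      (by
        simp only [LinearMap.sub_apply, LinearMap.smul_apply, LinearMap.proj_apply,
          smul_eq_mul, Matrix.cons_val_one, Matrix.head_cons, Matrix.cons_val_zero]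
        intro h; apply hn12; linear_combination h)
    have h2 : {k : Fin 2 → ℝ | Bval n (k 0) (k 1) = 0}
        = {k : Fin 2 → ℝ | (n 0 • (LinearMap.proj 1 : (Fin 2 → ℝ) →ₗ[ℝ] ℝ)
          - n 1 • (LinearMap.proj 0 : (Fin 2 → ℝ) →ₗ[ℝ] ℝ)) k = 0} := by
      ext k
      simp [Bval, LinearMap.sub_apply, LinearMap.smul_apply, LinearMap.proj_apply, smul_eq_mul]
    rw [h2]; exact h1
  have hBd2_meas : MeasurableSet Bd2 := by
    have m1 : MeasurableSet {p : Fin 3 → ℝ | Bval n (p 0) (p 1) = 0} :=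
      (isClosed_eq hB_cont continuous_const).measurableSet
    have m2 : MeasurableSet {p : Fin 3 → ℝ | p 2 = 0} :=
      (isClosed_eq (continuous_apply 2) continuous_const).measurableSet
    have m3 : MeasurableSet {p : Fin 3 → ℝ | p 2 = L} :=
      (isClosed_eq (continuous_apply 2) continuous_const).measurableSet
    have m4 : MeasurableSet {p : Fin 3 → ℝ | p 2 ∈ Icc (0:ℝ) L} :=
      (measurable_pi_apply 2) measurableSet_Icc
    have m5 : MeasurableSet {p : Fin 3 → ℝ |
        (1 - Real.cos (αc (p 2))) * Aval k0 ε n (p 0) (p 1)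
          - Real.sin (αc (p 2)) * Bval n (p 0) (p 1) = 0} :=
      (isClosed_eq hF_cont continuous_const).measurableSet
    exact (m1.compl).inter (m2.union (m3.union (m4.inter m5)))
  have hBd2_null : volume Bd2 = 0 := by
    apply null_of_slices Bd2 hBd2_meas
    have hae := (MeasureTheory.measure_eq_zero_iff_ae_notMem (μ := volume)).mp hBk_null
    filter_upwards [hae] with k hk
    have hkB : Bval n (k 0) (k 1) ≠ 0 := hk
    set E : Set ℝ := {t : ℝ | t ∈ Ioo (0:ℝ) L ∧
      (1 - Real.cos (α t)) * Aval k0 ε n (k 0) (k 1)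
        = Real.sin (α t) * Bval n (k 0) (k 1)} with hEdef
    have key : ∀ t ∈ E, ∃ m : ℤ,
        α t = bstar (Aval k0 ε n (k 0) (k 1)) (Bval n (k 0) (k 1)) + 2 * π * m
          ∧ 0 < α t ∧ α t < 2 * π := by
      intro t ht
      obtain ⟨⟨ht1, ht2⟩, hte⟩ := ht
      have htIcc : t ∈ Icc (0:ℝ) L := ⟨ht1.le, ht2.le⟩
      have hαt1 : 0 < α t := by
        rw [← hα0]; exact hmono (left_mem_Icc.mpr hL.le) htIcc ht1
      have hαt2 : α t < 2 * π := by
        rw [← hαL]; exact hmono htIcc (right_mem_Icc.mpr hL.le) ht2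
      rcases angle_eq hkB hte with ⟨m, hm⟩ | ⟨m, hm⟩
      · exfalso
        have hm0 : m = 0 := int_zero_of m (α t) (by linarith) (by linarith) hm
        rw [hm0] at hm; push_cast at hm; linarith
      · exact ⟨m, hm, hαt1, hαt2⟩
    have hEsub : E.Subsingleton := by
      intro t1 h1 t2 h2
      obtain ⟨m1, hm1, hp1, hq1⟩ := key t1 h1
      obtain ⟨m2, hm2, hp2, hq2⟩ := key t2 h2
      have hd : α t1 - α t2 = 2 * π * ((m1 - m2 : ℤ) : ℝ) := by push_cast; linarith
      have : m1 - m2 = 0 := int_zero_of _ _ (by linarith) (by linarith) hd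
      rw [this] at hd; simp at hd
      exact hmono.injOn ⟨h1.1.1.le, h1.1.2.le⟩ ⟨h2.1.1.le, h2.1.2.le⟩ (by linarith)
    have hsub : {t : ℝ |
        (MeasurableEquiv.piFinSuccAbove (fun _ : Fin 3 => ℝ) 2).symm (t, k) ∈ Bd2}
        ⊆ ({0} : Set ℝ) ∪ {L} ∪ E := by
      intro t ht
      obtain ⟨-, hcase⟩ := ht
      rcases hcase with h | h | ⟨hIcc, heq⟩
      · exact Or.inl (Or.inl h)
      · exact Or.inl (Or.inr h)
      · rcases eq_or_lt_of_le hIcc.1 with h0 | h0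
        · exact Or.inl (Or.inl h0.symm)
        · rcases eq_or_lt_of_le hIcc.2 with hL' | hL'
          · exact Or.inl (Or.inr hL')
          · refine Or.inr ⟨⟨h0, hL'⟩, ?_⟩
            have hIcc' : t ∈ Icc (0:ℝ) L := hIcc
            have heq' : (1 - Real.cos (αc t)) * Aval k0 ε n (k 0) (k 1)
                - Real.sin (αc t) * Bval n (k 0) (k 1) = 0 := heq
            rw [hαc_eq t hIcc'] at heq'
            linarith
    apply measure_mono_null hsub
    refine measure_union_null (measure_union_null (measure_singleton 0) (measure_singleton L)) ?_
    exact hEsub.measure_zero volume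
  -- glue
  have hUmeas : MeasurableSet (Uset k0 L) := by
    have m1 : MeasurableSet {p : Fin 3 → ℝ | p 0 ^ 2 + p 1 ^ 2 < k0 ^ 2} :=
      (isOpen_lt (((continuous_apply 0).pow 2).add ((continuous_apply 1).pow 2))
        continuous_const).measurableSet
    have m2 : MeasurableSet {p : Fin 3 → ℝ | p 2 ∈ Icc (0:ℝ) L} :=
      (measurable_pi_apply 2) measurableSet_Icc
    exact m1.inter m2
  have hae1 : ∀ᵐ p ∂(volume.restrict (Uset k0 L)), p ∉ Bd1 ∪ Bd2 := by
    apply ae_restrict_of_ae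
    exact (MeasureTheory.measure_eq_zero_iff_ae_notMem (μ := volume)).mp
      (measure_union_null hBd1_null hBd2_null)
  have hae2 : ∀ᵐ p ∂(volume.restrict (Uset k0 L)), p ∈ Uset k0 L := ae_restrict_mem hUmeas
  filter_upwards [hae1, hae2] with p hbad hpU
  have hB : Bval n (p 0) (p 1) ≠ 0 := fun h => hbad (Or.inl h)
  have hdis : ¬(p 2 = 0 ∨ p 2 = L ∨ (p 2 ∈ Icc (0:ℝ) L ∧
      (1 - Real.cos (αc (p 2))) * Aval k0 ε n (p 0) (p 1)
        - Real.sin (αc (p 2)) * Bval n (p 0) (p 1) = 0)) :=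
    fun h => hbad (Or.inr ⟨hB, h⟩)
  push_neg at hdis
  obtain ⟨hz, hLne, hFne⟩ := hdis
  have hp0 : 0 < p 2 := lt_of_le_of_ne hpU.2.1 (Ne.symm hz)
  have hpL : p 2 < L := lt_of_le_of_ne hpU.2.2 hLne
  have hne : (1 - Real.cos (α (p 2))) * Aval k0 ε n (p 0) (p 1)
      ≠ Real.sin (α (p 2)) * Bval n (p 0) (p 1) := by
    intro h
    apply hFne hpU.2
    rw [hαc_eq (p 2) hpU.2, h]; ring
  exact pointwise k0 L ε hk0 hL hε n hunit α hα hmono hα0 hαL p hpU hp0 hpL hB hne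
end
end

section
/- Let k0>0, let n(t)=e1=(1,0,0)ᵀ be constant and α(t)=t for t∈[0,2π] (so L=2π). Then the image T₊(U) equals the set { y=(y1,y2,y3)∈ℝ³ : ‖y‖² < 2k0² and (√(y2²+y3²)−k0)² + y1² ≤ k0² }. -/
set_option maxHeartbeats 800000


open MeasureTheory Set

noncomputable section

lemma Tmap_apply (k0 : ℝ) (p : Fin 3 → ℝ) :
    Tmap k0 1 (fun _ => ![1, 0, 0]) (fun t => t) p =
    ![p 0, Real.cos (p 2) * p 1 + Real.sin (p 2) * (kappa k0 (p 0) (p 1) - k0),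
      Real.cos (p 2) * (kappa k0 (p 0) (p 1) - k0) - Real.sin (p 2) * p 1] := by
  funext i
  fin_cases i <;> simp [Tmap, rot3, dot3, cross3, hpm] <;> ring

lemma exists_angle (a b : ℝ) (hab : a ^ 2 + b ^ 2 = 1) :
    ∃ t, 0 ≤ t ∧ t ≤ 2 * Real.pi ∧ Real.cos t = a ∧ Real.sin t = b := by
  have hpi := Real.pi_pos
  set z : ℂ := ⟨a, b⟩ with hzdef
  have habs : ‖z‖ = 1 := by
    rw [Complex.norm_def, Complex.normSq_mk]
    rw [show a * a + b * b = 1 by nlinarith]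
    exact Real.sqrt_one
  have hzne : z ≠ 0 := by
    intro h; rw [h] at habs; simp at habs
  have hcos0 : Real.cos z.arg = a := by
    rw [Complex.cos_arg hzne, habs, div_one]
  have hsin0 : Real.sin z.arg = b := by
    rw [Complex.sin_arg, habs, div_one]
  have harg1 := Complex.neg_pi_lt_arg z
  have harg2 := Complex.arg_le_pi z
  by_cases h : z.arg < 0
  · exact ⟨z.arg + 2 * Real.pi, by linarith, by linarith,
      by rw [Real.cos_add_two_pi, hcos0], by rw [Real.sin_add_two_pi, hsin0]⟩
  · exact ⟨z.arg, by linarith, by linarith, hcos0, hsin0⟩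

theorem stmt5 (k0 : ℝ) (hk0 : 0 < k0) :
    Tmap k0 1 (fun _ => ![1, 0, 0]) (fun t => t) '' Uset k0 (2 * Real.pi) =
      {y : Fin 3 → ℝ | y 0 ^ 2 + y 1 ^ 2 + y 2 ^ 2 < 2 * k0 ^ 2 ∧
        (Real.sqrt (y 1 ^ 2 + y 2 ^ 2) - k0) ^ 2 + y 0 ^ 2 ≤ k0 ^ 2} := by
  ext y
  simp only [mem_image, mem_setOf_eq]
  constructor
  · rintro ⟨p, ⟨hlt, _ht⟩, rfl⟩
    rw [Tmap_apply]
    obtain ⟨c, hc0, hc2⟩ : ∃ c, 0 < c ∧ c ^ 2 = k0 ^ 2 - p 0 ^ 2 - p 1 ^ 2 ∧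
        kappa k0 (p 0) (p 1) = c := by
      refine ⟨kappa k0 (p 0) (p 1), ?_, ?_, rfl⟩
      · exact Real.sqrt_pos.mpr (by linarith)
      · exact Real.sq_sqrt (by linarith)
    obtain ⟨hc2, hceq⟩ := hc2
    rw [hceq]
    have hpyth := Real.sin_sq_add_cos_sq (p 2)
    have hy12 : (Real.cos (p 2) * p 1 + Real.sin (p 2) * (c - k0)) ^ 2 +
        (Real.cos (p 2) * (c - k0) - Real.sin (p 2) * p 1) ^ 2
        = p 1 ^ 2 + (c - k0) ^ 2 := by nlinarith [hpyth]
    constructor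
    · simp only [Matrix.cons_val_zero, Matrix.cons_val_one, Matrix.head_cons,
        Matrix.cons_val_two, Matrix.tail_cons]
      nlinarith [hpyth, hc0, hk0]
    · simp only [Matrix.cons_val_zero, Matrix.cons_val_one, Matrix.head_cons,
        Matrix.cons_val_two, Matrix.tail_cons]
      rw [hy12]
      obtain ⟨r, hr0, hr2, habs⟩ :
          ∃ r, 0 ≤ r ∧ r ^ 2 = p 1 ^ 2 + (c - k0) ^ 2 ∧
            Real.sqrt (p 1 ^ 2 + (c - k0) ^ 2) = r :=
        ⟨Real.sqrt (p 1 ^ 2 + (c - k0) ^ 2), Real.sqrt_nonneg _,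
          Real.sq_sqrt (by positivity), rfl⟩
      rw [habs]
      have hkcr : k0 - c ≤ r := by
        nlinarith [sq_nonneg (r - (k0 - c)), sq_nonneg (r + (k0 - c)), sq_nonneg (p 1)]
      nlinarith [mul_le_mul_of_nonneg_left hkcr hk0.le]
  · rintro ⟨hy1, hy2⟩
    obtain ⟨r, hr0, hr2, hreq⟩ :
        ∃ r, 0 ≤ r ∧ r ^ 2 = y 1 ^ 2 + y 2 ^ 2 ∧ Real.sqrt (y 1 ^ 2 + y 2 ^ 2) = r :=
      ⟨Real.sqrt (y 1 ^ 2 + y 2 ^ 2), Real.sqrt_nonneg _, Real.sq_sqrt (by positivity), rfl⟩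
    rw [hreq] at hy2
    have hy0 : y 0 ^ 2 < k0 ^ 2 := by
      by_contra h
      push_neg at h
      nlinarith [sq_nonneg (r - k0)]
    obtain ⟨ρ, hρ0, hρ2⟩ : ∃ ρ, 0 ≤ ρ ∧ ρ ^ 2 = k0 ^ 2 - y 0 ^ 2 :=
      ⟨Real.sqrt _, Real.sqrt_nonneg _, Real.sq_sqrt (by linarith)⟩
    have hρk : ρ ≤ k0 := by nlinarith
    have hρr : k0 - r ≤ ρ := by nlinarith [sq_nonneg (ρ - (k0 - r)), sq_nonneg (ρ + (k0 - r))]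
    obtain ⟨c, hc0, hck⟩ : ∃ c, 0 < c ∧ 2 * k0 * c = 2 * k0 ^ 2 - y 0 ^ 2 - r ^ 2 := by
      refine ⟨(2 * k0 ^ 2 - y 0 ^ 2 - r ^ 2) / (2 * k0), div_pos (by nlinarith) (by linarith), ?_⟩
      field_simp
    have hcρ : c ≤ ρ := by
      nlinarith [mul_nonneg (by linarith : (0:ℝ) ≤ r + k0 - ρ) (by linarith : (0:ℝ) ≤ r + ρ - k0)]
    have hcB : c ^ 2 ≤ k0 ^ 2 - y 0 ^ 2 := by nlinarith
    obtain ⟨p1, hp10, hp12⟩ : ∃ p1, 0 ≤ p1 ∧ p1 ^ 2 = k0 ^ 2 - y 0 ^ 2 - c ^ 2 :=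
      ⟨Real.sqrt _, Real.sqrt_nonneg _, Real.sq_sqrt (by linarith)⟩
    have hkap : kappa k0 (y 0) p1 = c := by
      rw [kappa, show k0 ^ 2 - y 0 ^ 2 - p1 ^ 2 = c ^ 2 by linarith]
      exact Real.sqrt_sq hc0.le
    have hpd : p1 ^ 2 + (c - k0) ^ 2 = r ^ 2 := by nlinarith
    have hpi := Real.pi_pos
    obtain ⟨t, ht1, ht2, hcos, hsin⟩ :
        ∃ t, 0 ≤ t ∧ t ≤ 2 * Real.pi ∧
          Real.cos t * p1 + Real.sin t * (c - k0) = y 1 ∧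
          Real.cos t * (c - k0) - Real.sin t * p1 = y 2 := by
      rcases eq_or_lt_of_le hr0 with hr | hrpos
      · have hr' : r = 0 := hr.symm
        have hy1z : y 1 = 0 := by nlinarith
        have hy2z : y 2 = 0 := by nlinarith
        have hp1z : p1 = 0 := by nlinarith
        have hdz : c - k0 = 0 := by nlinarith
        exact ⟨0, le_refl _, by linarith, by simp [hp1z, hdz, hy1z],
          by simp [hp1z, hdz, hy2z]⟩
      · have hr2ne : r ^ 2 ≠ 0 := by positivity
        have hab : ((y 1 * p1 + y 2 * (c - k0)) / r ^ 2) ^ 2 +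
            ((y 1 * (c - k0) - y 2 * p1) / r ^ 2) ^ 2 = 1 := by
          rw [div_pow, div_pow, ← add_div, div_eq_one_iff_eq (by positivity)]
          linear_combination (y 1 ^ 2 + y 2 ^ 2) * hpd - r ^ 2 * hr2
        obtain ⟨t, ht1, ht2, hcos, hsin⟩ := exists_angle _ _ hab
        refine ⟨t, ht1, ht2, ?_, ?_⟩
        · rw [hcos, hsin, div_mul_eq_mul_div, div_mul_eq_mul_div, ← add_div,
            div_eq_iff hr2ne]
          linear_combination y 1 * hpd
        · rw [hcos, hsin, div_mul_eq_mul_div, div_mul_eq_mul_div, div_sub_div_same,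
            div_eq_iff hr2ne]
          linear_combination y 2 * hpd
    refine ⟨![y 0, p1, t], ⟨?_, ht1, ht2⟩, ?_⟩
    · simp only [Matrix.cons_val_zero, Matrix.cons_val_one, Matrix.head_cons]
      nlinarith
    · rw [Tmap_apply]
      funext i
      fin_cases i <;>
        simp only [Matrix.cons_val_zero, Matrix.cons_val_one, Matrix.head_cons,
          Matrix.cons_val_two, Matrix.tail_cons, Fin.isValue]
      · rfl
      · rw [hkap]; exact hcos
      · rw [hkap]; exact hsin
end
end

section
/- Let k0>0, L>0, n∈C¹([0,L],S²) and α∈C¹([0,L],ℝ), and define the trajectory e(t)=R_{n(t),α(t)}e3 for t∈[0,L], where e3=(0,0,1)ᵀ. Let y∈ℝ³ with ‖y‖<√2·k0. Then: (i) there exists (k1,k2,t)∈U with T₊(k1,k2,t)=y if and only if there exists t∈[0,L] with y·e(t) = −‖y‖²/(2k0); and (ii) the cardinality of the preimage T₊⁻¹(y) within U equals the cardinality of the set { t∈[0,L] : y·e(t) = −‖y‖²/(2k0) }. -/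
open MeasureTheory Set

noncomputable section

lemma rot_dot (N : Fin 3 → ℝ) (θ : ℝ) (h : dot3 N N = 1) (a b : Fin 3 → ℝ) :
    dot3 (rot3 N θ a) (rot3 N θ b) = dot3 a b := by
  have hp := Real.sin_sq_add_cos_sq θ
  simp only [dot3, rot3, cross3, Matrix.cons_val_zero, Matrix.cons_val_one, Matrix.head_cons,
    Matrix.cons_val_two, Matrix.tail_cons] at h ⊢
  linear_combination
    ((a 0 * b 0 + a 1 * b 1 + a 2 * b 2)
      - (N 0 * a 0 + N 1 * a 1 + N 2 * a 2) * (N 0 * b 0 + N 1 * b 1 + N 2 * b 2)) * hp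
    + ((1 - Real.cos θ) ^ 2 * (N 0 * a 0 + N 1 * a 1 + N 2 * a 2) * (N 0 * b 0 + N 1 * b 1 + N 2 * b 2)
      + Real.sin θ ^ 2 * (a 0 * b 0 + a 1 * b 1 + a 2 * b 2)) * h

lemma rot_rot_neg (N : Fin 3 → ℝ) (θ : ℝ) (h : dot3 N N = 1) (a : Fin 3 → ℝ) :
    rot3 N θ (rot3 N (-θ) a) = a := by
  have hp := Real.sin_sq_add_cos_sq θ
  simp only [dot3] at h
  have key : ∀ i : Fin 3, rot3 N θ (rot3 N (-θ) a) i =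
      ((1 - Real.cos θ) ^ 2 * (N 0 * a 0 + N 1 * a 1 + N 2 * a 2) * N i
        + Real.sin θ ^ 2 * a i) * (N 0 * N 0 + N 1 * N 1 + N 2 * N 2 - 1)
      + (a i - (N 0 * a 0 + N 1 * a 1 + N 2 * a 2) * N i)
        * (Real.sin θ ^ 2 + Real.cos θ ^ 2 - 1) + a i := by
    intro i
    fin_cases i <;>
      simp only [dot3, rot3, cross3, Real.sin_neg, Real.cos_neg, Matrix.cons_val_zero,
        Matrix.cons_val_one, Matrix.head_cons, Matrix.cons_val_two, Matrix.tail_cons,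
        Fin.isValue, Fin.mk_one, Fin.mk_zero, show (⟨2, by norm_num⟩ : Fin 3) = 2 from rfl] <;>
      ring
  funext i
  rw [key i, h, hp]
  ring

lemma rot_neg_rot (N : Fin 3 → ℝ) (θ : ℝ) (h : dot3 N N = 1) (a : Fin 3 → ℝ) :
    rot3 N (-θ) (rot3 N θ a) = a := by
  have := rot_rot_neg N (-θ) h a
  rwa [neg_neg] at this

theorem stmt6 (k0 L : ℝ) (hk0 : 0 < k0) (hL : 0 < L)
    (n : ℝ → Fin 3 → ℝ) (α : ℝ → ℝ)
    (hn : ContDiffOn ℝ 1 n (Icc 0 L)) (hα : ContDiffOn ℝ 1 α (Icc 0 L))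
    (hunit : ∀ t ∈ Icc (0 : ℝ) L, dot3 (n t) (n t) = 1)
    (y : Fin 3 → ℝ)
    (hy : Real.sqrt (y 0 ^ 2 + y 1 ^ 2 + y 2 ^ 2) < Real.sqrt 2 * k0) :
    ((∃ q ∈ Uset k0 L, Tmap k0 1 n α q = y) ↔
      ∃ t ∈ Icc (0 : ℝ) L,
        dot3 y (rot3 (n t) (α t) ![0, 0, 1]) =
          -(y 0 ^ 2 + y 1 ^ 2 + y 2 ^ 2) / (2 * k0)) ∧
    Set.ncard {q ∈ Uset k0 L | Tmap k0 1 n α q = y} =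
      Set.ncard {t ∈ Icc (0 : ℝ) L |
        dot3 y (rot3 (n t) (α t) ![0, 0, 1]) =
          -(y 0 ^ 2 + y 1 ^ 2 + y 2 ^ 2) / (2 * k0)} := by
  have hk0' : k0 ≠ 0 := ne_of_gt hk0
  have hS0 : (0:ℝ) ≤ y 0 ^ 2 + y 1 ^ 2 + y 2 ^ 2 := by positivity
  have hSlt : y 0 ^ 2 + y 1 ^ 2 + y 2 ^ 2 < 2 * k0 ^ 2 := by
    by_contra hc
    push_neg at hc
    have h1 : Real.sqrt (2 * k0 ^ 2) ≤ Real.sqrt (y 0 ^ 2 + y 1 ^ 2 + y 2 ^ 2) :=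
      Real.sqrt_le_sqrt hc
    rw [Real.sqrt_mul (by norm_num) , Real.sqrt_sq hk0.le] at h1
    linarith
  have hdotyy : dot3 y y = y 0 ^ 2 + y 1 ^ 2 + y 2 ^ 2 := by simp [dot3]; ring
  set f : ℝ → Fin 3 → ℝ :=
    fun t => ![rot3 (n t) (-(α t)) y 0, rot3 (n t) (-(α t)) y 1, t] with hf
  -- forward direction
  have fwd : ∀ q ∈ Uset k0 L, Tmap k0 1 n α q = y →
      q 2 ∈ Icc (0:ℝ) L ∧
      dot3 y (rot3 (n (q 2)) (α (q 2)) ![0, 0, 1]) =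
        -(y 0 ^ 2 + y 1 ^ 2 + y 2 ^ 2) / (2 * k0) ∧
      q = f (q 2) := by
    intro q hqU hqT
    obtain ⟨hq1, hq2⟩ := hqU
    have hN := hunit _ hq2
    have hTm : rot3 (n (q 2)) (α (q 2)) (hpm k0 1 (q 0) (q 1)) = y := hqT
    have hκsq : kappa k0 (q 0) (q 1) ^ 2 = k0 ^ 2 - q 0 ^ 2 - q 1 ^ 2 :=
      Real.sq_sqrt (by linarith)
    have hde : dot3 y (rot3 (n (q 2)) (α (q 2)) ![0, 0, 1]) = kappa k0 (q 0) (q 1) - k0 := by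
      rw [← hTm, rot_dot _ _ hN]
      simp [dot3, hpm]
    have hyy : dot3 y y = 2 * k0 * (k0 - kappa k0 (q 0) (q 1)) := by
      rw [← hTm, rot_dot _ _ hN]
      simp only [dot3, hpm, Matrix.cons_val_zero, Matrix.cons_val_one, Matrix.head_cons,
        Matrix.cons_val_two, Matrix.tail_cons]
      linear_combination hκsq
    refine ⟨hq2, ?_, ?_⟩
    · rw [hde, ← hdotyy, hyy]
      field_simp
      ring
    · have hw : rot3 (n (q 2)) (-(α (q 2))) y = hpm k0 1 (q 0) (q 1) := by
        rw [← hTm, rot_neg_rot _ _ hN]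
      funext i
      fin_cases i <;> simp [hf, hw, hpm]
  -- backward direction
  have bwd : ∀ t ∈ Icc (0:ℝ) L,
      dot3 y (rot3 (n t) (α t) ![0, 0, 1]) =
        -(y 0 ^ 2 + y 1 ^ 2 + y 2 ^ 2) / (2 * k0) →
      f t ∈ Uset k0 L ∧ Tmap k0 1 n α (f t) = y := by
    intro t ht hC
    have hN := hunit t ht
    set w : Fin 3 → ℝ := rot3 (n t) (-(α t)) y with hwdef
    have hrw : rot3 (n t) (α t) w = y := rot_rot_neg _ _ hN y
    have hw2 : w 2 = -(y 0 ^ 2 + y 1 ^ 2 + y 2 ^ 2) / (2 * k0) := by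
      have h1 : dot3 y (rot3 (n t) (α t) ![0, 0, 1]) = dot3 w ![0, 0, 1] := by
        conv_lhs => rw [← hrw]
        exact rot_dot _ _ hN _ _
      have h2 : dot3 w ![0, 0, 1] = w 2 := by simp [dot3]
      rw [← h2, ← h1, hC]
    have hsum : w 0 ^ 2 + w 1 ^ 2 + w 2 ^ 2 = y 0 ^ 2 + y 1 ^ 2 + y 2 ^ 2 := by
      have hww : dot3 w w = dot3 y y := by
        conv_rhs => rw [← hrw]
        exact (rot_dot _ _ hN _ _).symm
      simp only [dot3] at hww
      linear_combination hww + hdotyy - hdotyy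
    have hm : w 2 * (2 * k0) = -(y 0 ^ 2 + y 1 ^ 2 + y 2 ^ 2) := by
      rw [hw2]; field_simp
    have hkey : (w 2 + k0) ^ 2 = k0 ^ 2 - w 0 ^ 2 - w 1 ^ 2 := by
      linear_combination hm + hsum
    have hpos : 0 < w 2 + k0 := by nlinarith [hm, hSlt, hk0]
    have hball : w 0 ^ 2 + w 1 ^ 2 < k0 ^ 2 := by nlinarith [hkey, pow_pos hpos 2]
    have hkap : kappa k0 (w 0) (w 1) = w 2 + k0 := by
      rw [kappa, ← hkey, Real.sqrt_sq hpos.le]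
    have hpmw : hpm k0 1 (w 0) (w 1) = w := by
      funext i
      fin_cases i <;> simp [hpm, hkap]
    constructor
    · refine ⟨?_, ?_⟩ <;> simp [hf, Uset]
      · exact hball
      · exact ht
    · show rot3 (n (f t 2)) (α (f t 2)) (hpm k0 1 (f t 0) (f t 1)) = y
      have e0 : f t 0 = w 0 := by simp [hf, hwdef]
      have e1 : f t 1 = w 1 := by simp [hf, hwdef]
      have e2 : f t 2 = t := by simp [hf]
      rw [e0, e1, e2, hpmw, hrw]
  constructor
  · constructor
    · rintro ⟨q, hU, hT⟩
      obtain ⟨h1, h2, _⟩ := fwd q hU hT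
      exact ⟨q 2, h1, h2⟩
    · rintro ⟨t, ht, hC⟩
      exact ⟨f t, (bwd t ht hC).1, (bwd t ht hC).2⟩
  · have hset : {q ∈ Uset k0 L | Tmap k0 1 n α q = y} =
        f '' {t ∈ Icc (0:ℝ) L |
          dot3 y (rot3 (n t) (α t) ![0, 0, 1]) =
            -(y 0 ^ 2 + y 1 ^ 2 + y 2 ^ 2) / (2 * k0)} := by
      ext q
      simp only [mem_setOf_eq, mem_image]
      constructor
      · rintro ⟨hU, hT⟩
        obtain ⟨h1, h2, h3⟩ := fwd q hU hT
        exact ⟨q 2, ⟨h1, h2⟩, h3.symm⟩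
      · rintro ⟨t, ⟨ht, hC⟩, rfl⟩
        exact bwd t ht hC
    rw [hset]
    exact Set.ncard_image_of_injOn (fun a _ b _ hab => by
      have := congrFun hab 2
      simpa [hf] using this)
end
end

section
/- Let k0>0, let 0<c≤π/2, and let y1∈ℝ satisfy 0 < y1 < 2k0·sin c. Then the equation sin(c·sin t)·sin t = y1/(2k0) has exactly four solutions t in the interval (0,2π); moreover the function t ↦ sin(c·sin t)·sin t is strictly increasing on (0,π/2) with supremum sin c. -/
/-!
On `[0, π/2]` both `sin t` and `sin (c * sin t)` increase (as `c * sin t ∈ [0, c] ⊆ [0, π/2]`), so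
`f t = sin (c sin t) sin t` increases strictly from `0` to `sin c`, and every value in `(0, sin c)`
is taken exactly once there, at some `t₀`. Since `f (π - t) = f t` and `f (t + π) = f t`, the
solutions in `(0, 2π)` are exactly `t₀, π - t₀, π + t₀, 2π - t₀`.
-/

open Set Real

noncomputable def coveringProfile (c t : ℝ) : ℝ := sin (c * sin t) * sin t

section SymmetricProfile

variable {g : ℝ → ℝ} {t₀ : ℝ}

lemma eq_or_eq_pi_sub_of_strictMonoOn (hsym : ∀ t, g (π - t) = g t)
    (hmono : StrictMonoOn g (Icc 0 (π / 2))) (ht₀ : t₀ ∈ Ioo 0 (π / 2))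
    {s : ℝ} (hs : s ∈ Ioo 0 π) (hgs : g s = g t₀) : s = t₀ ∨ s = π - t₀ := by
  have hinj : ∀ t ∈ Icc 0 (π / 2), g t = g t₀ → t = t₀ := fun t ht h =>
    hmono.injOn ht (Ioo_subset_Icc_self ht₀) h
  rcases le_total s (π / 2) with h | h
  · exact .inl (hinj s ⟨hs.1.le, h⟩ hgs)
  · have := hinj (π - s) ⟨by linarith [hs.2], by linarith⟩ (by rw [hsym, hgs])
    exact .inr (by linarith)

lemma setOf_mem_Ioo_two_pi_eq (hper : Function.Periodic g π) (hsym : ∀ t, g (π - t) = g t)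
    (hmono : StrictMonoOn g (Icc 0 (π / 2))) (ht₀ : t₀ ∈ Ioo 0 (π / 2)) :
    {t ∈ Ioo 0 (2 * π) | g t = g t₀} = {t₀, π - t₀, π + t₀, 2 * π - t₀} := by
  obtain ⟨h0, h1⟩ := ht₀
  have hpi : g π ≠ g t₀ := by
    rw [← zero_add π, hper]
    exact (hmono ⟨le_rfl, pi_div_two_pos.le⟩ ⟨h0.le, h1.le⟩ h0).ne
  ext t
  simp only [mem_ofPred_eq, mem_Ioo, mem_insert_iff, mem_singleton_iff]
  constructor
  · rintro ⟨⟨ht0, ht2⟩, hgt⟩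
    rcases lt_trichotomy t π with h | rfl | h
    · have := eq_or_eq_pi_sub_of_strictMonoOn hsym hmono ⟨h0, h1⟩ ⟨ht0, h⟩ hgt
      tauto
    · exact absurd hgt hpi
    · have hgs : g (t - π) = g t₀ := by rw [← hper, sub_add_cancel, hgt]
      rcases eq_or_eq_pi_sub_of_strictMonoOn hsym hmono ⟨h0, h1⟩
        ⟨by linarith, by linarith⟩ hgs with h' | h'
      · exact .inr (.inr (.inl (by linarith)))
      · exact .inr (.inr (.inr (by linarith)))
  · rintro (rfl | rfl | rfl | rfl)
    · exact ⟨⟨h0, by linarith⟩, rfl⟩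
    · exact ⟨⟨by linarith, by linarith⟩, hsym _⟩
    · exact ⟨⟨by linarith, by linarith⟩, by rw [add_comm, hper]⟩
    · refine ⟨⟨by linarith, by linarith⟩, ?_⟩
      rw [show 2 * π - t₀ = (π - t₀) + π by ring, hper, hsym]

end SymmetricProfile

lemma ncard_reflections_eq_four {t₀ : ℝ} (ht₀ : t₀ ∈ Ioo 0 (π / 2)) :
    ({t₀, π - t₀, π + t₀, 2 * π - t₀} : Set ℝ).ncard = 4 := by
  obtain ⟨h0, h1⟩ := ht₀
  rw [ncard_insert_of_notMem (by simp only [mem_insert_iff, mem_singleton_iff]; grind),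
    ncard_insert_of_notMem (by simp only [mem_insert_iff, mem_singleton_iff]; grind),
    ncard_pair (by grind)]

namespace coveringProfile

variable {c : ℝ}

lemma periodic (c : ℝ) : Function.Periodic (coveringProfile c) π := fun t => by
  simp only [coveringProfile, sin_add_pi, mul_neg, sin_neg, neg_mul, neg_neg]

lemma apply_pi_sub (c t : ℝ) : coveringProfile c (π - t) = coveringProfile c t := by
  simp only [coveringProfile, sin_pi_sub]

lemma apply_zero (c : ℝ) : coveringProfile c 0 = 0 := by simp [coveringProfile]

lemma apply_pi_div_two (c : ℝ) : coveringProfile c (π / 2) = sin c := by simp [coveringProfile]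

lemma strictMonoOn (hc0 : 0 < c) (hc : c ≤ π / 2) :
    StrictMonoOn (coveringProfile c) (Icc 0 (π / 2)) := by
  intro x hx y hy hxy
  have hsin : sin x < sin y :=
    strictMonoOn_sin ⟨by linarith [hx.1], hx.2⟩ ⟨by linarith [hy.1], hy.2⟩ hxy
  have hsx0 : 0 ≤ sin x := sin_nonneg_of_nonneg_of_le_pi hx.1 (by linarith [hx.2])
  have hsy1 : sin y ≤ 1 := sin_le_one y
  have hcsin : sin (c * sin x) < sin (c * sin y) :=
    strictMonoOn_sin ⟨by nlinarith, by nlinarith⟩ ⟨by nlinarith, by nlinarith⟩ (by nlinarith)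
  have hcsx0 : 0 ≤ sin (c * sin x) :=
    sin_nonneg_of_nonneg_of_le_pi (by positivity) (by nlinarith)
  calc sin (c * sin x) * sin x ≤ sin (c * sin x) * sin y := by gcongr
    _ < sin (c * sin y) * sin y := by gcongr; linarith

lemma image_Ioo (hc0 : 0 < c) (hc : c ≤ π / 2) :
    coveringProfile c '' Ioo 0 (π / 2) = Ioo 0 (sin c) := by
  have hcont : Continuous (coveringProfile c) := by unfold coveringProfile; fun_prop
  have h := intermediate_value_Ioo pi_div_two_pos.le hcont.continuousOn
  rw [apply_zero, apply_pi_div_two] at h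
  refine h.antisymm' ?_
  rintro _ ⟨t, ht, rfl⟩
  have hmono := strictMonoOn hc0 hc
  have hπ := pi_div_two_pos
  constructor
  · simpa [apply_zero] using
      hmono ⟨le_rfl, hπ.le⟩ (Ioo_subset_Icc_self ht) ht.1
  · simpa [apply_pi_div_two] using
      hmono (Ioo_subset_Icc_self ht) ⟨hπ.le, le_rfl⟩ ht.2

end coveringProfile

theorem stmt8 (k0 c y1 : ℝ) (hk0 : 0 < k0) (hc0 : 0 < c) (hc : c ≤ Real.pi / 2)
    (hy1 : 0 < y1) (hy1' : y1 < 2 * k0 * Real.sin c) :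
    Set.ncard {t ∈ Ioo (0 : ℝ) (2 * Real.pi) |
        Real.sin (c * Real.sin t) * Real.sin t = y1 / (2 * k0)} = 4 ∧
    StrictMonoOn (fun t => Real.sin (c * Real.sin t) * Real.sin t)
      (Ioo (0 : ℝ) (Real.pi / 2)) ∧
    sSup ((fun t => Real.sin (c * Real.sin t) * Real.sin t) ''
        Ioo (0 : ℝ) (Real.pi / 2)) = Real.sin c := by
  have hmono := coveringProfile.strictMonoOn hc0 hc
  have himage := coveringProfile.image_Ioo hc0 hc
  have hsinc : 0 < sin c := sin_pos_of_pos_of_lt_pi hc0 (by linarith [pi_pos])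
  have hv : y1 / (2 * k0) ∈ Ioo 0 (sin c) :=
    ⟨by positivity, by rw [div_lt_iff₀ (by positivity)]; linarith⟩
  obtain ⟨t₀, ht₀, hft₀⟩ := himage.symm ▸ hv
  refine ⟨?_, hmono.mono Ioo_subset_Icc_self, ?_⟩
  · change {t ∈ Ioo 0 (2 * π) | coveringProfile c t = y1 / (2 * k0)}.ncard = 4
    rw [← hft₀, setOf_mem_Ioo_two_pi_eq (coveringProfile.periodic c)
      (coveringProfile.apply_pi_sub c) hmono ht₀]
    exact ncard_reflections_eq_four ht₀
  · exact (congrArg sSup himage).trans (csSup_Ioo hsinc)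
end

section
/- Let n≥2 and write points of ℝⁿ as (s,r) with s∈ℝ, r∈ℝ^{n−1}. For φ,ψ in the Schwartz space 𝓢(ℝⁿ), define the partial convolution along the first coordinate (φ ∗₁ ψ)(t,r) = ∫_ℝ φ(s,r)ψ(t−s,r)ds. Then φ∗₁ψ∈𝓢(ℝⁿ), and for each fixed ψ∈𝓢(ℝⁿ) the linear map φ ↦ ψ∗₁φ is continuous from 𝓢(ℝⁿ) to itself. -/
open MeasureTheory

open MeasureTheory SchwartzMap
open scoped ContDiff
set_option synthInstance.maxHeartbeats 1000000
set_option maxHeartbeats 2000000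
set_option linter.unusedVariables false

noncomputable section

variable {G E F : Type*} [NormedAddCommGroup G] [NormedSpace ℝ G]
  [NormedAddCommGroup E] [NormedSpace ℝ E] [NormedAddCommGroup F] [NormedSpace ℝ F]

lemma iteratedFDeriv_comp_const_add {f : G → F} (hf : ContDiff ℝ ∞ f) (a : G) (n : ℕ) :
    (iteratedFDeriv ℝ n fun y => f (a + y)) = fun x => iteratedFDeriv ℝ n f (a + x) := by
  induction n with
  | zero => funext x; ext m; simp
  | succ n ih =>
    funext x
    have hdiff : DifferentiableAt ℝ (iteratedFDeriv ℝ n f) (a + x) :=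
      (hf.differentiable_iteratedFDeriv (by exact_mod_cast lt_top_iff_ne_top.2 (by simp))).differentiableAt
    have h2 : HasFDerivAt (fun y : G => a + y) (ContinuousLinearMap.id ℝ G) x := by
      simpa using (hasFDerivAt_id x).const_add a
    have h3 : HasFDerivAt (fun y => iteratedFDeriv ℝ n f (a + y))
        (fderiv ℝ (iteratedFDeriv ℝ n f) (a + x)) x := by
      have h4 := hdiff.hasFDerivAt.comp x h2
      rwa [ContinuousLinearMap.comp_id] at h4
    rw [iteratedFDeriv_succ_eq_comp_left, iteratedFDeriv_succ_eq_comp_left]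
    simp only [Function.comp_apply]
    rw [ih, h3.fderiv]

lemma partial_smooth {f : ℝ × E → F} (hf : ContDiff ℝ ∞ f) (s : ℝ) :
    ContDiff ℝ ∞ (fun y : E => f (s, y)) :=
  hf.comp (contDiff_const.prodMk contDiff_id)

lemma partial_iteratedFDeriv {f : ℝ × E → F} (hf : ContDiff ℝ ∞ f) (n : ℕ) (s : ℝ) (x : E) :
    iteratedFDeriv ℝ n (fun y : E => f (s, y)) x =
      (iteratedFDeriv ℝ n f (s, x)).compContinuousLinearMap
        (fun _ => ContinuousLinearMap.inr ℝ ℝ E) := by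
  have h1 : (fun y : E => f (s, y)) =
      (fun z : ℝ × E => f ((s, 0) + z)) ∘ (ContinuousLinearMap.inr ℝ ℝ E) := by
    funext y; simp [Prod.ext_iff]
  have hshift : ContDiff ℝ ∞ (fun z : ℝ × E => f ((s, 0) + z)) :=
    hf.comp (contDiff_const.add contDiff_id)
  rw [h1, ContinuousLinearMap.iteratedFDeriv_comp_right (ContinuousLinearMap.inr ℝ ℝ E)
    hshift _ (by exact_mod_cast le_top),
    iteratedFDeriv_comp_const_add hf]
  simp

lemma norm_partial_iteratedFDeriv_le {f : ℝ × E → F} (hf : ContDiff ℝ ∞ f) (n : ℕ) (s : ℝ)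
    (x : E) :
    ‖iteratedFDeriv ℝ n (fun y : E => f (s, y)) x‖ ≤ ‖iteratedFDeriv ℝ n f (s, x)‖ := by
  rw [partial_iteratedFDeriv hf]
  refine (ContinuousMultilinearMap.norm_compContinuousLinearMap_le _ _).trans ?_
  have h1 : ‖ContinuousLinearMap.inr ℝ ℝ E‖ ≤ 1 := by
    refine ContinuousLinearMap.opNorm_le_bound _ zero_le_one (fun y => ?_)
    simp [Prod.norm_def]
  calc ‖iteratedFDeriv ℝ n f (s, x)‖ * ∏ _i : Fin n, ‖ContinuousLinearMap.inr ℝ ℝ E‖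
      ≤ ‖iteratedFDeriv ℝ n f (s, x)‖ * 1 := by
        gcongr
        exact Finset.prod_le_one (fun _ _ => norm_nonneg _) (fun _ _ => h1)
    _ = _ := mul_one _

variable {E : Type*} [NormedAddCommGroup E] [NormedSpace ℝ E]

/-- The partial iterated derivative in the second variable. -/
def Pd (f : 𝓢(ℝ × E, ℂ)) (n : ℕ) (s : ℝ) (x : E) : E [×n]→L[ℝ] ℂ :=
  iteratedFDeriv ℝ n (fun y => f (s, y)) x

lemma continuous_Pd (f : 𝓢(ℝ × E, ℂ)) (n : ℕ) (x : E) :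
    Continuous (fun s => Pd f n s x) := by
  have : (fun s => Pd f n s x) = (fun s : ℝ =>
      (ContinuousMultilinearMap.compContinuousLinearMapL
        (fun _ : Fin n => ContinuousLinearMap.inr ℝ ℝ E))
        (iteratedFDeriv ℝ n f (s, x))) := by
    funext s
    unfold Pd
    rw [partial_iteratedFDeriv (f.smooth ⊤)]
    rfl
  rw [this]
  exact (ContinuousMultilinearMap.compContinuousLinearMapL _).continuous.comp
    (((f.smooth ⊤).continuous_iteratedFDeriv (mod_cast le_top)).comp
      (continuous_id.prodMk continuous_const))

lemma est_Pd (f : 𝓢(ℝ × E, ℂ)) (k n : ℕ) (s : ℝ) (x : E) :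
    (1 + ‖x‖) ^ k * ‖Pd f n s x‖ ≤
      (2 ^ (k + 2) * ((Finset.Iic (k + 2, n)).sup (schwartzSeminormFamily ℂ (ℝ × E) ℂ) f)) /
        (1 + |s|) ^ 2 := by
  rw [le_div_iff₀ (by positivity)]
  have h1 : ‖Pd f n s x‖ ≤ ‖iteratedFDeriv ℝ n f (s, x)‖ :=
    norm_partial_iteratedFDeriv_le (f.smooth ⊤) n s x
  have hs : |s| ≤ ‖(s, x)‖ := norm_fst_le (s, x)
  have hx : ‖x‖ ≤ ‖(s, x)‖ := norm_snd_le (s, x)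
  calc (1 + ‖x‖) ^ k * ‖Pd f n s x‖ * (1 + |s|) ^ 2
      ≤ (1 + ‖(s, x)‖) ^ k * ‖iteratedFDeriv ℝ n f (s, x)‖ * (1 + ‖(s, x)‖) ^ 2 := by
        gcongr
    _ = (1 + ‖(s, x)‖) ^ (k + 2) * ‖iteratedFDeriv ℝ n f (s, x)‖ := by ring
    _ ≤ 2 ^ (k + 2) * ((Finset.Iic (k + 2, n)).sup
          (schwartzSeminormFamily ℂ (ℝ × E) ℂ) f) := by
        exact one_add_le_sup_seminorm_apply (m := (k + 2, n)) le_rfl le_rfl f (s, x)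

lemma integrable_inv_sq : Integrable (fun s : ℝ => ((1 + |s|) ^ 2)⁻¹) := by
  have h0 : Integrable (fun s : ℝ => (1 + ‖s‖) ^ (-(2 : ℝ))) :=
    integrable_one_add_norm (by norm_num)
  refine h0.congr (Filter.Eventually.of_forall (fun s => ?_))
  have hpos : (0:ℝ) < 1 + |s| := by positivity
  show (1 + ‖s‖) ^ (-(2:ℝ)) = ((1 + |s|) ^ 2)⁻¹
  rw [Real.norm_eq_abs, Real.rpow_neg hpos.le, show ((2:ℝ)) = ((2:ℕ):ℝ) by norm_num,
    Real.rpow_natCast]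

lemma integrable_bound (C : ℝ) : Integrable (fun s : ℝ => C / (1 + |s|) ^ 2) := by
  simpa [div_eq_mul_inv] using integrable_inv_sq.const_mul C

lemma integrable_Pd (f : 𝓢(ℝ × E, ℂ)) (n : ℕ) (x : E) :
    Integrable (fun s => Pd f n s x) := by
  refine Integrable.mono' (g := fun s =>
    (2 ^ 2 * ((Finset.Iic (2, n)).sup (schwartzSeminormFamily ℂ (ℝ × E) ℂ) f)) / (1 + |s|) ^ 2)
    (integrable_bound _) ((continuous_Pd f n x).aestronglyMeasurable)
    (Filter.Eventually.of_forall (fun s => ?_))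
  simpa using est_Pd f 0 n s x

lemma integrable_marg (f : 𝓢(ℝ × E, ℂ)) (x : E) : Integrable (fun s => f (s, x)) := by
  refine Integrable.mono' (g := fun s =>
    (2 ^ 2 * ((Finset.Iic (2, 0)).sup (schwartzSeminormFamily ℂ (ℝ × E) ℂ) f)) / (1 + |s|) ^ 2)
    (integrable_bound _) ?_ (Filter.Eventually.of_forall (fun s => ?_))
  · exact (f.continuous.comp (continuous_id.prodMk continuous_const)).aestronglyMeasurable
  · have := est_Pd f 0 0 s x
    simpa [Pd, norm_iteratedFDeriv_zero] using this

lemma LinearIsometryEquiv.integral_comp_comm' {X Y : Type*} [NormedAddCommGroup X]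
    [NormedSpace ℝ X] [CompleteSpace X] [NormedAddCommGroup Y] [NormedSpace ℝ Y] [CompleteSpace Y] (L : X ≃ₗᵢ[ℝ] Y) {φ : ℝ → X}
    (h : Integrable φ) : ∫ s, L (φ s) = L (∫ s, φ s) := by
  have h0 := ContinuousLinearMap.integral_comp_comm
    (L.toContinuousLinearEquiv.toContinuousLinearMap) h
  simpa using h0

/-- The candidate `n`-th derivative of the marginal. -/
def Gm (f : 𝓢(ℝ × E, ℂ)) (n : ℕ) (x : E) : E [×n]→L[ℝ] ℂ := ∫ s, Pd f n s x

lemma hasFDerivAt_Gm (f : 𝓢(ℝ × E, ℂ)) (n : ℕ) (x₀ : E) :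
    HasFDerivAt (Gm f n)
      (continuousMultilinearCurryLeftEquiv ℝ (fun _ : Fin (n + 1) => E) ℂ (Gm f (n + 1) x₀))
      x₀ := by
  set L := continuousMultilinearCurryLeftEquiv ℝ (fun _ : Fin (n + 1) => E) ℂ with hL
  set B := 2 ^ 2 * ((Finset.Iic (2, n + 1)).sup (schwartzSeminormFamily ℂ (ℝ × E) ℂ) f) with hB
  have key : HasFDerivAt (fun x => ∫ s, Pd f n s x)
      (∫ s, L (Pd f (n + 1) s x₀)) x₀ := by
    apply hasFDerivAt_integral_of_dominated_of_fderiv_le (s := Metric.ball x₀ 1) (Metric.ball_mem_nhds x₀ one_pos)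
      (F := fun x s => Pd f n s x) (F' := fun x s => L (Pd f (n + 1) s x))
      (bound := fun s => B / (1 + |s|) ^ 2)
    · exact Filter.Eventually.of_forall
        (fun x => (continuous_Pd f n x).aestronglyMeasurable)
    · exact integrable_Pd f n x₀
    · exact (L.continuous.comp (continuous_Pd f (n + 1) x₀)).aestronglyMeasurable
    · refine Filter.Eventually.of_forall (fun s => fun x _ => ?_)
      rw [L.norm_map]
      have := est_Pd f 0 (n + 1) s x
      simpa using this
    · exact integrable_bound B
    · refine Filter.Eventually.of_forall (fun s => fun x _ => ?_)
      have hsm : ContDiff ℝ ∞ (fun y : E => f (s, y)) := partial_smooth (f.smooth ⊤) s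
      have hd : DifferentiableAt ℝ (iteratedFDeriv ℝ n (fun y : E => f (s, y))) x :=
        (hsm.differentiable_iteratedFDeriv
          (by exact_mod_cast lt_top_iff_ne_top.2 (by simp))).differentiableAt
      have h1 := hd.hasFDerivAt
      have h2 : fderiv ℝ (iteratedFDeriv ℝ n (fun y : E => f (s, y))) x
          = L (Pd f (n + 1) s x) := congrFun fderiv_iteratedFDeriv x
      rw [h2] at h1
      exact h1
  have hint : ∫ s, L (Pd f (n + 1) s x₀)
      = L (Gm f (n + 1) x₀) := by
    rw [Gm]
    exact LinearIsometryEquiv.integral_comp_comm' (X := E [×(n+1)]→L[ℝ] ℂ)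
      (Y := E →L[ℝ] (E [×n]→L[ℝ] ℂ)) L (integrable_Pd f (n + 1) x₀)
  rw [hint] at key
  exact key

lemma iteratedFDeriv_marg (f : 𝓢(ℝ × E, ℂ)) (n : ℕ) :
    iteratedFDeriv ℝ n (fun x => ∫ s, f (s, x)) = Gm f n := by
  induction n with
  | zero =>
    funext x
    have hPd : (fun s => Pd f 0 s x) =
        (fun s => (continuousMultilinearCurryFin0 ℝ E ℂ).symm (f (s, x))) := by
      funext s
      show iteratedFDeriv ℝ 0 (fun y => f (s, y)) x = _
      rw [iteratedFDeriv_zero_eq_comp]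
      rfl
    have h0 := LinearIsometryEquiv.integral_comp_comm'
      (continuousMultilinearCurryFin0 ℝ E ℂ).symm (integrable_marg f x)
    rw [iteratedFDeriv_zero_eq_comp, Function.comp_apply, Gm, hPd]
    exact h0.symm
  | succ n ih =>
    funext x
    rw [iteratedFDeriv_succ_eq_comp_left, Function.comp_apply, ih,
      (hasFDerivAt_Gm f n x).fderiv]
    simp

lemma contDiff_marg (f : 𝓢(ℝ × E, ℂ)) : ContDiff ℝ ∞ (fun x => ∫ s, f (s, x)) := by
  apply contDiff_of_differentiable_iteratedFDeriv (n := ⊤)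
  intro n _
  rw [iteratedFDeriv_marg]
  exact fun x => (hasFDerivAt_Gm f n x).differentiableAt

/-- Integration along the first coordinate as a continuous linear map on Schwartz space. -/
def margCLM : 𝓢(ℝ × E, ℂ) →L[ℂ] 𝓢(E, ℂ) := by
  refine mkCLM (𝕜 := ℂ) (fun f x => ∫ s, f (s, x)) (fun f g x => ?_) (fun c f x => ?_)
    (fun f => contDiff_marg f) ?_
  · simp only [SchwartzMap.add_apply]
    exact integral_add (integrable_marg f x) (integrable_marg g x)
  · simp only [SchwartzMap.smul_apply, RingHom.id_apply]
    exact integral_smul c _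
  · rintro ⟨k, n⟩
    refine ⟨Finset.Iic (k + 2, n), 2 ^ (k + 2) * (∫ s : ℝ, ((1 + |s|) ^ 2)⁻¹),
      by positivity, fun f x => ?_⟩
    have h1 : iteratedFDeriv ℝ n (fun x => ∫ s, f (s, x)) x = Gm f n x := by
      rw [iteratedFDeriv_marg]
    rw [h1]
    set S := (Finset.Iic (k + 2, n)).sup (schwartzSeminormFamily ℂ (ℝ × E) ℂ) f with hS
    have h2 : ‖Gm f n x‖ ≤ ∫ s, ‖Pd f n s x‖ := norm_integral_le_integral_norm _
    calc ‖x‖ ^ k * ‖Gm f n x‖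
        ≤ (1 + ‖x‖) ^ k * ∫ s, ‖Pd f n s x‖ := by
          have hxk : ‖x‖ ^ k ≤ (1 + ‖x‖) ^ k :=
            pow_le_pow_left₀ (norm_nonneg x) (by linarith) k
          exact mul_le_mul hxk h2 (norm_nonneg _) (by positivity)
      _ = ∫ s, (1 + ‖x‖) ^ k * ‖Pd f n s x‖ := (MeasureTheory.integral_const_mul _ _).symm
      _ ≤ ∫ s, (2 ^ (k + 2) * S) / (1 + |s|) ^ 2 := by
          refine integral_mono ((integrable_Pd f n x).norm.const_mul _)
            (integrable_bound _) (fun s => est_Pd f k n s x)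
      _ = 2 ^ (k + 2) * S * ∫ s : ℝ, ((1 + |s|) ^ 2)⁻¹ := by
          simp_rw [div_eq_mul_inv]
          exact MeasureTheory.integral_const_mul _ _
      _ = (2 ^ (k + 2) * ∫ s : ℝ, ((1 + |s|) ^ 2)⁻¹) * S := by ring

lemma margCLM_apply (f : 𝓢(ℝ × E, ℂ)) (x : E) : margCLM f x = ∫ s, f (s, x) := rfl

section Tensor

variable (E) in
/-- projection `(s,(t,r)) ↦ (s,r)` -/
def proj₁ : (ℝ × (ℝ × E)) →L[ℝ] ℝ × E :=
  (ContinuousLinearMap.fst ℝ ℝ (ℝ × E)).prod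
    ((ContinuousLinearMap.snd ℝ ℝ E).comp (ContinuousLinearMap.snd ℝ ℝ (ℝ × E)))

variable (E) in
/-- projection `(s,(t,r)) ↦ (t,r)` -/
def proj₂ : (ℝ × (ℝ × E)) →L[ℝ] ℝ × E := ContinuousLinearMap.snd ℝ ℝ (ℝ × E)

@[simp] lemma proj₁_apply (p : ℝ × (ℝ × E)) : proj₁ E p = (p.1, p.2.2) := rfl
@[simp] lemma proj₂_apply (p : ℝ × (ℝ × E)) : proj₂ E p = p.2 := rfl

lemma norm_itfd_comp_clm_le {D D₂ : Type*} [NormedAddCommGroup D] [NormedSpace ℝ D]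
    [NormedAddCommGroup D₂] [NormedSpace ℝ D₂] {g : D₂ → ℂ} (hg : ContDiff ℝ ∞ g)
    (q : D →L[ℝ] D₂) (hq : ‖q‖ ≤ 1) (i : ℕ) (p : D) :
    ‖iteratedFDeriv ℝ i (fun p => g (q p)) p‖ ≤ ‖iteratedFDeriv ℝ i g (q p)‖ := by
  rw [show (fun p => g (q p)) = g ∘ q from rfl,
    ContinuousLinearMap.iteratedFDeriv_comp_right q hg p (mod_cast le_top)]
  refine (ContinuousMultilinearMap.norm_compContinuousLinearMap_le _ _).trans ?_
  calc ‖iteratedFDeriv ℝ i g (q p)‖ * ∏ _j : Fin i, ‖q‖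
      ≤ ‖iteratedFDeriv ℝ i g (q p)‖ * 1 := by
        gcongr
        exact Finset.prod_le_one (fun _ _ => norm_nonneg _) (fun _ _ => hq)
    _ = _ := mul_one _

lemma norm_proj₁_le : ‖proj₁ E‖ ≤ 1 := by
  refine ContinuousLinearMap.opNorm_le_bound _ zero_le_one (fun p => ?_)
  rw [one_mul]
  have h1 : ‖(p.1, p.2.2)‖ = max ‖p.1‖ ‖p.2.2‖ := rfl
  simp only [proj₁_apply, h1]
  exact max_le (norm_fst_le p) ((norm_snd_le p.2).trans (norm_snd_le p))

lemma norm_proj₂_le : ‖proj₂ E‖ ≤ 1 := by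
  refine ContinuousLinearMap.opNorm_le_bound _ zero_le_one (fun p => ?_)
  rw [one_mul]
  exact norm_snd_le p

lemma one_add_norm_split (p : ℝ × (ℝ × E)) :
    1 + ‖p‖ ≤ (1 + ‖proj₁ E p‖) * (1 + ‖proj₂ E p‖) := by
  have h1 : ‖p.1‖ ≤ ‖proj₁ E p‖ := norm_fst_le ((p.1, p.2.2) : ℝ × E)
  have h2 : ‖p.2‖ = ‖proj₂ E p‖ := rfl
  have hmax : ‖p‖ ≤ ‖p.1‖ + ‖p.2‖ := by
    rw [Prod.norm_def]
    exact max_le (by linarith [norm_nonneg p.2]) (by linarith [norm_nonneg p.1])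
  nlinarith [norm_nonneg p.1, norm_nonneg p.2, norm_nonneg (proj₁ E p), norm_nonneg (proj₂ E p)]

/-- The map `φ ↦ ((s,(t,r)) ↦ ψ(s,r) * φ(t,r))` as a CLM between Schwartz spaces. -/
def tensorCLM (ψ : 𝓢(ℝ × E, ℂ)) : 𝓢(ℝ × E, ℂ) →L[ℂ] 𝓢(ℝ × (ℝ × E), ℂ) := by
  refine mkCLM (𝕜 := ℂ) (fun φ p => ψ (proj₁ E p) * φ (proj₂ E p))
    (fun φ φ' p => by simp [mul_add]) (fun c φ p => by simp; ring)
    (fun φ => ((ψ.smooth ⊤).comp (proj₁ E).contDiff).mul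
      ((φ.smooth ⊤).comp (proj₂ E).contDiff)) ?_
  rintro ⟨k, n⟩
  set Sψ := (Finset.Iic (k, n)).sup (schwartzSeminormFamily ℂ (ℝ × E) ℂ) ψ with hSψ
  have hSψ0 : 0 ≤ Sψ := apply_nonneg _ ψ
  refine ⟨Finset.Iic (k, n), 2 ^ n * 2 ^ k * 2 ^ k * Sψ, by positivity, fun φ p => ?_⟩
  set Sφ := (Finset.Iic (k, n)).sup (schwartzSeminormFamily ℂ (ℝ × E) ℂ) φ with hSφ
  have hSφ0 : 0 ≤ Sφ := apply_nonneg _ φ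
  have hmul := norm_iteratedFDeriv_mul_le (𝕜 := ℝ)
    ((ψ.smooth ⊤).comp (proj₁ E).contDiff) ((φ.smooth ⊤).comp (proj₂ E).contDiff) p
    (n := n) (mod_cast le_top)
  have hsplit : ‖p‖ ^ k ≤ (1 + ‖proj₁ E p‖) ^ k * (1 + ‖proj₂ E p‖) ^ k := by
    rw [← mul_pow]
    exact pow_le_pow_left₀ (norm_nonneg p)
      (le_trans (by linarith [one_add_norm_split p]) (le_refl _)) k
  calc ‖p‖ ^ k * ‖iteratedFDeriv ℝ n (fun p => ψ (proj₁ E p) * φ (proj₂ E p)) p‖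
      ≤ ((1 + ‖proj₁ E p‖) ^ k * (1 + ‖proj₂ E p‖) ^ k) *
          ∑ i ∈ Finset.range (n + 1), (n.choose i : ℝ) *
            ‖iteratedFDeriv ℝ i (fun p => ψ (proj₁ E p)) p‖ *
            ‖iteratedFDeriv ℝ (n - i) (fun p => φ (proj₂ E p)) p‖ := by
        exact mul_le_mul hsplit hmul (norm_nonneg _) (by positivity)
    _ = ∑ i ∈ Finset.range (n + 1), (n.choose i : ℝ) *
          (((1 + ‖proj₁ E p‖) ^ k * ‖iteratedFDeriv ℝ i (fun p => ψ (proj₁ E p)) p‖) *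
           ((1 + ‖proj₂ E p‖) ^ k * ‖iteratedFDeriv ℝ (n - i) (fun p => φ (proj₂ E p)) p‖)) := by
        rw [Finset.mul_sum]
        exact Finset.sum_congr rfl (fun i _ => by ring)
    _ ≤ ∑ i ∈ Finset.range (n + 1), (n.choose i : ℝ) * ((2 ^ k * Sψ) * (2 ^ k * Sφ)) := by
        refine Finset.sum_le_sum (fun i hi => ?_)
        have hi' : i ≤ n := Nat.lt_succ_iff.mp (Finset.mem_range.mp hi)
        have t1 : (1 + ‖proj₁ E p‖) ^ k * ‖iteratedFDeriv ℝ i (fun p => ψ (proj₁ E p)) p‖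
            ≤ 2 ^ k * Sψ := by
          refine le_trans ?_ (one_add_le_sup_seminorm_apply (𝕜 := ℂ) (m := (k, n)) le_rfl hi'
            ψ (proj₁ E p))
          gcongr
          exact norm_itfd_comp_clm_le (ψ.smooth ⊤) (proj₁ E) norm_proj₁_le i p
        have t2 : (1 + ‖proj₂ E p‖) ^ k *
              ‖iteratedFDeriv ℝ (n - i) (fun p => φ (proj₂ E p)) p‖
            ≤ 2 ^ k * Sφ := by
          refine le_trans ?_ (one_add_le_sup_seminorm_apply (𝕜 := ℂ) (m := (k, n)) le_rfl
            (Nat.sub_le n i) φ (proj₂ E p))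
          gcongr
          exact norm_itfd_comp_clm_le (φ.smooth ⊤) (proj₂ E) norm_proj₂_le (n - i) p
        have hmm := mul_le_mul t1 t2 (by positivity) (by positivity)
        exact mul_le_mul_of_nonneg_left hmm (by positivity)
    _ = (2 ^ n * 2 ^ k * 2 ^ k * Sψ) * Sφ := by
        rw [← Finset.sum_mul]
        have hchoose : ∑ i ∈ Finset.range (n + 1), (n.choose i : ℝ) = 2 ^ n := by
          exact_mod_cast congrArg (Nat.cast (R := ℝ)) (Nat.sum_range_choose n)
        rw [hchoose]
        ring

end Tensor

section Shear

variable (E) in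
/-- `(s,(t,r)) ↦ (s,(t-s,r))` -/
def shearDown : (ℝ × (ℝ × E)) →L[ℝ] ℝ × (ℝ × E) :=
  (ContinuousLinearMap.fst ℝ ℝ (ℝ × E)).prod
    (((((ContinuousLinearMap.fst ℝ ℝ E).comp (ContinuousLinearMap.snd ℝ ℝ (ℝ × E))) -
      (ContinuousLinearMap.fst ℝ ℝ (ℝ × E)))).prod
      ((ContinuousLinearMap.snd ℝ ℝ E).comp (ContinuousLinearMap.snd ℝ ℝ (ℝ × E))))

variable (E) in
/-- `(s,(t,r)) ↦ (s,(t+s,r))` -/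
def shearUp : (ℝ × (ℝ × E)) →L[ℝ] ℝ × (ℝ × E) :=
  (ContinuousLinearMap.fst ℝ ℝ (ℝ × E)).prod
    (((((ContinuousLinearMap.fst ℝ ℝ E).comp (ContinuousLinearMap.snd ℝ ℝ (ℝ × E))) +
      (ContinuousLinearMap.fst ℝ ℝ (ℝ × E)))).prod
      ((ContinuousLinearMap.snd ℝ ℝ E).comp (ContinuousLinearMap.snd ℝ ℝ (ℝ × E))))

@[simp] lemma shearDown_apply (p : ℝ × (ℝ × E)) :
    shearDown E p = (p.1, (p.2.1 - p.1, p.2.2)) := rfl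

@[simp] lemma shearUp_apply (p : ℝ × (ℝ × E)) :
    shearUp E p = (p.1, (p.2.1 + p.1, p.2.2)) := rfl

variable (E) in
/-- `(s,(t,r)) ↦ (s,(t-s,r))` as a continuous linear equivalence. -/
def shearEquiv : (ℝ × (ℝ × E)) ≃L[ℝ] ℝ × (ℝ × E) :=
  ContinuousLinearEquiv.equivOfInverse (shearDown E) (shearUp E)
    (fun p => by simp) (fun p => by simp)

@[simp] lemma shearEquiv_apply (p : ℝ × (ℝ × E)) :
    shearEquiv E p = (p.1, (p.2.1 - p.1, p.2.2)) := rfl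

end Shear

/-- Partial convolution `φ ↦ ((t,r) ↦ ∫ s, ψ(s,r) φ(t-s,r))` as a CLM on Schwartz space. -/
def convCLM (ψ : 𝓢(ℝ × E, ℂ)) : 𝓢(ℝ × E, ℂ) →L[ℂ] 𝓢(ℝ × E, ℂ) :=
  margCLM.comp ((compCLMOfContinuousLinearEquiv ℂ (shearEquiv E)).comp (tensorCLM ψ))

lemma convCLM_apply (ψ φ : 𝓢(ℝ × E, ℂ)) (x : ℝ × E) :
    convCLM ψ φ x = ∫ s, ψ (s, x.2) * φ (x.1 - s, x.2) := by
  show margCLM _ x = _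
  rw [margCLM_apply]
  refine integral_congr_ae (Filter.Eventually.of_forall (fun s => ?_))
  show (tensorCLM ψ φ) (shearEquiv E (s, x)) = _
  simp only [shearEquiv_apply]
  rfl

theorem stmt15 (m : ℕ) (hm : 1 ≤ m) (ψ : SchwartzMap (ℝ × (Fin m → ℝ)) ℂ) :
    -- the partial convolution of two Schwartz functions is a Schwartz function
    (∀ φ : SchwartzMap (ℝ × (Fin m → ℝ)) ℂ,
      ∃ χ : SchwartzMap (ℝ × (Fin m → ℝ)) ℂ,
        ∀ (t : ℝ) (r : Fin m → ℝ),
          χ (t, r) = ∫ s : ℝ, φ (s, r) * ψ (t - s, r)) ∧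
    -- and for fixed ψ the map φ ↦ ψ ∗₁ φ is a continuous linear map on Schwartz space
    ∃ C : SchwartzMap (ℝ × (Fin m → ℝ)) ℂ →L[ℂ] SchwartzMap (ℝ × (Fin m → ℝ)) ℂ,
      ∀ (φ : SchwartzMap (ℝ × (Fin m → ℝ)) ℂ) (t : ℝ) (r : Fin m → ℝ),
        C φ (t, r) = ∫ s : ℝ, ψ (s, r) * φ (t - s, r) := by
  constructor
  · intro φ
    refine ⟨convCLM ψ φ, fun t r => ?_⟩
    rw [convCLM_apply]
    have h := integral_sub_left_eq_self (fun s => φ (s, r) * ψ (t - s, r)) volume t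
    simp only [sub_sub_cancel] at h
    rw [← h]
    exact integral_congr_ae (Filter.Eventually.of_forall (fun s => mul_comm _ _))
  · exact ⟨convCLM ψ, fun φ t r => convCLM_apply ψ φ (t, r)⟩
end
end

section
/- Let k0>0 and c>k0. Then the function (k1,k2) ↦ |k0² − k1² − k2²|^{−1/2} is integrable on the disk B_c = {(k1,k2)∈ℝ² : k1²+k2² < c²}, and ∫_{B_c} |k0² − k1² − k2²|^{−1/2} d(k1,k2) = 2π·(k0 + √(c² − k0²)). -/
open MeasureTheory Set Real intervalIntegral

private lemma stmt19_meas_aux (k0 : ℝ) : AEStronglyMeasurable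
    (fun r : ℝ => r * |k0 ^ 2 - r ^ 2| ^ (-(1:ℝ)/2)) volume := by
  apply Measurable.aestronglyMeasurable
  measurability

private lemma stmt19_rpow_abs_eq (t : ℝ) (ht : 0 < t) :
    |t| ^ (-(1:ℝ)/2) = (Real.sqrt t)⁻¹ := by
  rw [abs_of_pos ht, neg_div, Real.rpow_neg ht.le, ← Real.sqrt_eq_rpow]

private lemma stmt19_ii1 (k0 : ℝ) (hk0 : 0 < k0) :
    IntervalIntegrable (fun r => r * |k0 ^ 2 - r ^ 2| ^ (-(1:ℝ)/2)) volume 0 k0 := by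
  have hbase : IntervalIntegrable (fun x : ℝ => x ^ (-(1:ℝ)/2)) volume 0 k0 :=
    intervalIntegral.intervalIntegrable_rpow' (by norm_num)
  have hcomp := (hbase.comp_sub_left k0).symm
  simp only [sub_zero, sub_self] at hcomp
  have hbound := hcomp.const_mul (k0 * k0 ^ (-(1:ℝ)/2))
  refine hbound.mono_fun (stmt19_meas_aux k0).restrict ?_
  rw [Filter.EventuallyLE, ae_restrict_iff' measurableSet_uIoc]
  filter_upwards with r hr
  rw [Set.uIoc_of_le hk0.le] at hr
  obtain ⟨hr0, hrk⟩ := hr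
  rw [Real.norm_eq_abs, Real.norm_eq_abs]
  have h1 : k0 ^ 2 - r ^ 2 = (k0 - r) * (k0 + r) := by ring
  have hkr : (0:ℝ) ≤ k0 - r := by linarith
  have hkr' : (0:ℝ) < k0 + r := by linarith
  have habs : |k0 ^ 2 - r ^ 2| = (k0 - r) * (k0 + r) := by
    rw [h1, abs_of_nonneg (mul_nonneg hkr hkr'.le)]
  rw [habs, Real.mul_rpow hkr hkr'.le]
  have e1 : |r * ((k0 - r) ^ (-(1:ℝ)/2) * (k0 + r) ^ (-(1:ℝ)/2))|
      = r * (k0 + r) ^ (-(1:ℝ)/2) * (k0 - r) ^ (-(1:ℝ)/2) := by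
    rw [abs_of_nonneg (by positivity)]; ring
  have e2 : |k0 * k0 ^ (-(1:ℝ)/2) * (k0 - r) ^ (-(1:ℝ)/2)|
      = k0 * k0 ^ (-(1:ℝ)/2) * (k0 - r) ^ (-(1:ℝ)/2) := by
    rw [abs_of_nonneg (by positivity)]
  rw [e1, e2]
  have hmono : (k0 + r) ^ (-(1:ℝ)/2) ≤ k0 ^ (-(1:ℝ)/2) :=
    Real.rpow_le_rpow_of_nonpos hk0 (by linarith) (by norm_num)
  have : r * (k0 + r) ^ (-(1:ℝ)/2) ≤ k0 * k0 ^ (-(1:ℝ)/2) :=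
    mul_le_mul hrk hmono (by positivity) hk0.le
  exact mul_le_mul_of_nonneg_right this (by positivity)

private lemma stmt19_ii2 (k0 c : ℝ) (hk0 : 0 < k0) (hc : k0 < c) :
    IntervalIntegrable (fun r => r * |k0 ^ 2 - r ^ 2| ^ (-(1:ℝ)/2)) volume k0 c := by
  have hbase : IntervalIntegrable (fun x : ℝ => x ^ (-(1:ℝ)/2)) volume 0 (c - k0) :=
    intervalIntegral.intervalIntegrable_rpow' (by norm_num)
  have hcomp := hbase.comp_sub_right k0
  simp only [zero_add, sub_add_cancel] at hcomp
  have hbound := hcomp.const_mul (c * (2 * k0) ^ (-(1:ℝ)/2))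
  refine hbound.mono_fun (stmt19_meas_aux k0).restrict ?_
  rw [Filter.EventuallyLE, ae_restrict_iff' measurableSet_uIoc]
  filter_upwards with r hr
  rw [Set.uIoc_of_le hc.le] at hr
  obtain ⟨hr0, hrk⟩ := hr
  rw [Real.norm_eq_abs, Real.norm_eq_abs]
  have hkr : (0:ℝ) ≤ r - k0 := by linarith
  have hkr' : (0:ℝ) < r + k0 := by linarith
  have habs : |k0 ^ 2 - r ^ 2| = (r - k0) * (r + k0) := by
    rw [abs_sub_comm, abs_of_nonneg (by nlinarith)]; ring
  rw [habs, Real.mul_rpow hkr hkr'.le]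
  have e1 : |r * ((r - k0) ^ (-(1:ℝ)/2) * (r + k0) ^ (-(1:ℝ)/2))|
      = r * (r + k0) ^ (-(1:ℝ)/2) * (r - k0) ^ (-(1:ℝ)/2) := by
    rw [abs_of_nonneg (mul_nonneg (by linarith) (by positivity))]; ring
  have e2 : |c * (2 * k0) ^ (-(1:ℝ)/2) * (r - k0) ^ (-(1:ℝ)/2)|
      = c * (2 * k0) ^ (-(1:ℝ)/2) * (r - k0) ^ (-(1:ℝ)/2) := by
    rw [abs_of_nonneg (mul_nonneg (mul_nonneg (by linarith) (by positivity)) (by positivity))]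
  rw [e1, e2]
  have hmono : (r + k0) ^ (-(1:ℝ)/2) ≤ (2 * k0) ^ (-(1:ℝ)/2) :=
    Real.rpow_le_rpow_of_nonpos (by linarith) (by linarith) (by norm_num)
  have : r * (r + k0) ^ (-(1:ℝ)/2) ≤ c * (2 * k0) ^ (-(1:ℝ)/2) :=
    mul_le_mul hrk hmono (by positivity) (by linarith)
  exact mul_le_mul_of_nonneg_right this (by positivity)

private lemma stmt19_v1 (k0 : ℝ) (hk0 : 0 < k0) :
    ∫ r in (0:ℝ)..k0, r * |k0 ^ 2 - r ^ 2| ^ (-(1:ℝ)/2) = k0 := by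
  have key := integral_eq_sub_of_hasDeriv_right_of_le hk0.le
    (f := fun r => -Real.sqrt (k0 ^ 2 - r ^ 2))
    (f' := fun r => r * |k0 ^ 2 - r ^ 2| ^ (-(1:ℝ)/2)) ?_ ?_ (stmt19_ii1 k0 hk0)
  · rw [key]
    simp [Real.sqrt_sq hk0.le]
  · exact (((continuous_const.sub (continuous_pow 2)).sqrt).neg).continuousOn
  · intro x hx
    obtain ⟨hx0, hxk⟩ := hx
    have ht : (0:ℝ) < k0 ^ 2 - x ^ 2 := by nlinarith
    have h1 : HasDerivAt (fun r : ℝ => k0 ^ 2 - r ^ 2) (-(2 * x)) x := by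
      simpa using ((hasDerivAt_pow 2 x).const_sub (k0 ^ 2))
    have h2 := (Real.hasDerivAt_sqrt ht.ne').comp x h1
    have h3 := h2.neg
    have heq : -(1 / (2 * Real.sqrt (k0 ^ 2 - x ^ 2)) * -(2 * x))
        = x * |k0 ^ 2 - x ^ 2| ^ (-(1:ℝ)/2) := by
      rw [stmt19_rpow_abs_eq _ ht]
      have hs : Real.sqrt (k0 ^ 2 - x ^ 2) ≠ 0 := by positivity
      field_simp
    rw [heq] at h3
    exact h3.hasDerivWithinAt

private lemma stmt19_v2 (k0 c : ℝ) (hk0 : 0 < k0) (hc : k0 < c) :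
    ∫ r in k0..c, r * |k0 ^ 2 - r ^ 2| ^ (-(1:ℝ)/2) = Real.sqrt (c ^ 2 - k0 ^ 2) := by
  have key := integral_eq_sub_of_hasDeriv_right_of_le hc.le
    (f := fun r => Real.sqrt (r ^ 2 - k0 ^ 2))
    (f' := fun r => r * |k0 ^ 2 - r ^ 2| ^ (-(1:ℝ)/2)) ?_ ?_ (stmt19_ii2 k0 c hk0 hc)
  · rw [key]
    simp
  · exact ((continuous_pow 2).sub continuous_const).sqrt.continuousOn
  · intro x hx
    obtain ⟨hx0, hxk⟩ := hx
    have ht : (0:ℝ) < x ^ 2 - k0 ^ 2 := by nlinarith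
    have h1 : HasDerivAt (fun r : ℝ => r ^ 2 - k0 ^ 2) (2 * x) x := by
      simpa using ((hasDerivAt_pow 2 x).sub_const (k0 ^ 2))
    have h2 := (Real.hasDerivAt_sqrt ht.ne').comp x h1
    have heq : 1 / (2 * Real.sqrt (x ^ 2 - k0 ^ 2)) * (2 * x)
        = x * |k0 ^ 2 - x ^ 2| ^ (-(1:ℝ)/2) := by
      rw [abs_sub_comm, stmt19_rpow_abs_eq _ ht]
      have hs : Real.sqrt (x ^ 2 - k0 ^ 2) ≠ 0 := by positivity
      field_simp
    rw [heq] at h2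
    exact h2.hasDerivWithinAt

private theorem stmt19_integrable_polar (g : ℝ × ℝ → ℝ) :
    Integrable g ↔
      IntegrableOn (fun p => p.1 • g (polarCoord.symm p)) polarCoord.target := by
  set B : ℝ × ℝ → ℝ × ℝ →L[ℝ] ℝ × ℝ := fun p =>
    LinearMap.toContinuousLinearMap (Matrix.toLin (Module.Basis.finTwoProd ℝ) (Module.Basis.finTwoProd ℝ)
      !![Real.cos p.2, -p.1 * Real.sin p.2; Real.sin p.2, p.1 * Real.cos p.2])
  have A : ∀ p ∈ polarCoord.target, HasFDerivWithinAt polarCoord.symm (B p) polarCoord.target p :=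
    fun p _ => (hasFDerivAt_polarCoord_symm p).hasFDerivWithinAt
  have B_det : ∀ p, (B p).det = p.1 := by
    intro p
    conv_rhs => rw [← one_mul p.1, ← cos_sq_add_sin_sq p.2]
    simp only [B, neg_mul, LinearMap.det_toContinuousLinearMap, LinearMap.det_toLin,
      Matrix.det_fin_two_of, sub_neg_eq_add]
    ring
  have hinj : Set.InjOn polarCoord.symm polarCoord.target := polarCoord.symm.injOn
  have himg : polarCoord.symm '' polarCoord.target = polarCoord.source :=
    polarCoord.symm_image_target_eq_source
  constructor
  · intro hg
    have h1 : IntegrableOn g polarCoord.source volume := hg.integrableOn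
    rw [← himg] at h1
    have h2 := (integrableOn_image_iff_integrableOn_abs_det_fderiv_smul volume
      polarCoord.open_target.measurableSet A hinj g).1 h1
    refine h2.congr_fun (fun p hp => ?_) polarCoord.open_target.measurableSet
    beta_reduce
    rw [B_det, abs_of_pos hp.1]
  · intro h2
    have h2' : IntegrableOn (fun p => |(B p).det| • g (polarCoord.symm p))
        polarCoord.target volume := by
      refine h2.congr_fun (fun p hp => ?_) polarCoord.open_target.measurableSet
      rw [B_det, abs_of_pos hp.1]
    have h1 := (integrableOn_image_iff_integrableOn_abs_det_fderiv_smul volume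
      polarCoord.open_target.measurableSet A hinj g).2 h2'
    rw [himg] at h1
    rwa [IntegrableOn, Measure.restrict_congr_set polarCoord_source_ae_eq_univ,
      Measure.restrict_univ] at h1

theorem stmt19 (k0 c : ℝ) (hk0 : 0 < k0) (hc : k0 < c) :
    IntegrableOn (fun p : ℝ × ℝ => |k0 ^ 2 - p.1 ^ 2 - p.2 ^ 2| ^ (-(1 : ℝ) / 2))
      {p : ℝ × ℝ | p.1 ^ 2 + p.2 ^ 2 < c ^ 2} volume ∧
    ∫ p : ℝ × ℝ in {p : ℝ × ℝ | p.1 ^ 2 + p.2 ^ 2 < c ^ 2},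
        |k0 ^ 2 - p.1 ^ 2 - p.2 ^ 2| ^ (-(1 : ℝ) / 2) =
      2 * Real.pi * (k0 + Real.sqrt (c ^ 2 - k0 ^ 2)) := by
  have hπ := Real.pi_pos
  have hc0 : (0:ℝ) < c := lt_trans hk0 hc
  set S : Set (ℝ × ℝ) := {p : ℝ × ℝ | p.1 ^ 2 + p.2 ^ 2 < c ^ 2} with hSdef
  set f : ℝ × ℝ → ℝ := fun p => |k0 ^ 2 - p.1 ^ 2 - p.2 ^ 2| ^ (-(1:ℝ)/2) with hfdef
  set F : ℝ → ℝ := fun r => r * |k0 ^ 2 - r ^ 2| ^ (-(1:ℝ)/2) with hFdef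
  have hS : MeasurableSet S := by
    apply measurableSet_lt _ measurable_const
    exact (measurable_fst.pow_const 2).add (measurable_snd.pow_const 2)
  have hii1 := stmt19_ii1 k0 hk0
  have hii2 := stmt19_ii2 k0 c hk0 hc
  -- pointwise identity on the polar target
  have hpt : ∀ p ∈ polarCoord.target, p.1 • (S.indicator f) (polarCoord.symm p)
      = (Ioo (0:ℝ) c).indicator F p.1 * 1 := by
    rintro ⟨r, θ⟩ hp
    rw [polarCoord_target] at hp
    obtain ⟨hr, hθ⟩ := hp
    have hr' : (0:ℝ) < r := hr
    have hsq : (r * Real.cos θ) ^ 2 + (r * Real.sin θ) ^ 2 = r ^ 2 := by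
      rw [mul_pow, mul_pow, ← mul_add, Real.cos_sq_add_sin_sq, mul_one]
    have hmem : polarCoord.symm (r, θ) ∈ S ↔ r < c := by
      simp only [polarCoord_symm_apply, hSdef, Set.mem_setOf_eq]
      rw [hsq]
      constructor
      · intro h
        exact lt_of_pow_lt_pow_left₀ 2 hc0.le h
      · intro h
        exact pow_lt_pow_left₀ h hr'.le (by norm_num)
    by_cases hrc : r < c
    · have hm1 : (r, θ).1 ∈ Ioo (0:ℝ) c := ⟨hr', hrc⟩
      rw [Set.indicator_of_mem (hmem.2 hrc), Set.indicator_of_mem hm1]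
      rw [smul_eq_mul, mul_one, hFdef, hfdef]
      simp only [polarCoord_symm_apply]
      have : k0 ^ 2 - (r * Real.cos θ) ^ 2 - (r * Real.sin θ) ^ 2 = k0 ^ 2 - r ^ 2 := by
        nlinarith [hsq]
      rw [this]
    · rw [Set.indicator_of_notMem (fun hm => hrc (hmem.1 hm)),
        Set.indicator_of_notMem (fun hm : (r, θ).1 ∈ Ioo (0:ℝ) c => hrc hm.2)]
      simp
  -- integrability of the radial indicator function
  have hintF : Integrable ((Ioo (0:ℝ) c).indicator F) (volume.restrict (Ioi (0:ℝ))) := by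
    rw [integrable_indicator_iff measurableSet_Ioo]
    have h1 : IntegrableOn F (Ioo 0 c) volume := by
      have h := hii1.trans hii2
      rwa [intervalIntegrable_iff_integrableOn_Ioo_of_le hc0.le] at h
    rwa [IntegrableOn, Measure.restrict_restrict measurableSet_Ioo,
      Set.inter_eq_self_of_subset_left Set.Ioo_subset_Ioi_self]
  have hint1 : Integrable (fun _ : ℝ => (1:ℝ))
      (volume.restrict (Ioo (-Real.pi) Real.pi)) := by
    rw [integrable_const_iff]
    right
    exact isFiniteMeasure_restrict.2 measure_Ioo_lt_top.ne
  have hprod := hintF.mul_prod hint1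
  rw [Measure.prod_restrict, ← Measure.volume_eq_prod] at hprod
  have htarget : IntegrableOn (fun p : ℝ × ℝ => (Ioo (0:ℝ) c).indicator F p.1 * 1)
      polarCoord.target volume := by
    rwa [IntegrableOn, polarCoord_target]
  have hInt : IntegrableOn (fun p : ℝ × ℝ => p.1 • (S.indicator f) (polarCoord.symm p))
      polarCoord.target volume :=
    htarget.congr_fun (fun p hp => (hpt p hp).symm) polarCoord.open_target.measurableSet
  have hg : Integrable (S.indicator f) := (stmt19_integrable_polar _).2 hInt
  have hfS : IntegrableOn f S volume := (integrable_indicator_iff hS).1 hg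
  refine ⟨hfS, ?_⟩
  have hval : ∫ r in (0:ℝ)..c, F r = k0 + Real.sqrt (c ^ 2 - k0 ^ 2) := by
    rw [← intervalIntegral.integral_add_adjacent_intervals hii1 hii2,
      stmt19_v1 k0 hk0, stmt19_v2 k0 c hk0 hc]
  have hradial : (∫ r in Ioi (0:ℝ), (Ioo (0:ℝ) c).indicator F r)
      = k0 + Real.sqrt (c ^ 2 - k0 ^ 2) := by
    rw [MeasureTheory.integral_indicator measurableSet_Ioo, Measure.restrict_restrict measurableSet_Ioo,
      Set.inter_eq_self_of_subset_left Set.Ioo_subset_Ioi_self,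
      ← MeasureTheory.integral_Ioc_eq_integral_Ioo, ← intervalIntegral.integral_of_le hc0.le,
      hval]
  have hangular : (∫ _ in Ioo (-Real.pi) Real.pi, (1:ℝ)) = 2 * Real.pi := by
    rw [setIntegral_const, Real.volume_real_Ioo_of_le (by linarith), smul_eq_mul, mul_one]
    ring
  calc ∫ p in S, f p = ∫ p, S.indicator f p := (MeasureTheory.integral_indicator hS).symm
    _ = ∫ p in polarCoord.target, p.1 • (S.indicator f) (polarCoord.symm p) :=
        (integral_comp_polarCoord_symm _).symm
    _ = ∫ p in polarCoord.target, (Ioo (0:ℝ) c).indicator F p.1 * 1 :=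
        setIntegral_congr_fun polarCoord.open_target.measurableSet hpt
    _ = (∫ r in Ioi (0:ℝ), (Ioo (0:ℝ) c).indicator F r) *
          ∫ _ in Ioo (-Real.pi) Real.pi, (1:ℝ) := by
        rw [polarCoord_target, Measure.volume_eq_prod, ← Measure.prod_restrict]
        exact MeasureTheory.integral_prod_mul ((Ioo (0:ℝ) c).indicator F) (fun _ => (1:ℝ))
    _ = 2 * Real.pi * (k0 + Real.sqrt (c ^ 2 - k0 ^ 2)) := by
        rw [hradial, hangular]; ring
end
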